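/- arXiv:1909.01217 — 7 statements merged into one kernel-verified Lean document; each statement's English description precedes it below -/
import Mathlib

section
/- Let G be a group, let k be a field of characteristic 0, and let M be a finite-dimensional k-vector space equipped with a linear action of G. Assume there exists an element c in the center of G such that c·m ≠ m for every nonzero m ∈ M. Then the group homology H_k(G; M) vanishes for all k ≥ 0. -/
open CategoryTheory

noncomputable section

/-- The submodule of a representation generated by the elements `g • a - a`; the quotient by it
is the module of coinvariants. -/
def augmentationSubmodule {k G : Type} [CommRing k] [Group G] (A : Rep.{0} k G) : Submodule k A :=
  Submodule.span k {x | ∃ (g : G) (a : A), x = A.ρ g a - a}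

/-- The coinvariants functor `Rep.{0} k G ⥤ ModuleCat k`, sending `A` to `A_G`. -/
def coinvariantsFunctor (k G : Type) [CommRing k] [Group G] : Rep.{0} k G ⥤ ModuleCat k where
  obj A := ModuleCat.of k (A ⧸ augmentationSubmodule A)
  map {A B} f := ModuleCat.ofHom (Submodule.mapQ (augmentationSubmodule A) (augmentationSubmodule B)
      f.hom.toLinearMap (by
      rw [augmentationSubmodule, Submodule.span_le]
      rintro x ⟨g, a, rfl⟩
      simp only [SetLike.mem_coe, Submodule.mem_comap, map_sub]
      exact Submodule.subset_span ⟨g, f.hom a, congrArg (· - f.hom a) (Rep.hom_comm_apply f g a)⟩))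
  map_id A := by
    apply ModuleCat.hom_ext
    apply Submodule.linearMap_qext
    rfl
  map_comp {A B C} f g := by
    apply ModuleCat.hom_ext
    apply Submodule.linearMap_qext
    rfl

instance coinvariantsFunctor.additive (k G : Type) [CommRing k] [Group G] :
    (coinvariantsFunctor k G).Additive where
  map_add := by
    intros A B f g
    apply ModuleCat.hom_ext
    apply Submodule.linearMap_qext
    ext x
    simp only [LinearMap.comp_apply, LinearMap.add_apply, coinvariantsFunctor,
      Submodule.mkQ_apply, Rep.add_hom, LinearMap.add_apply]
    rfl

/-- Group homology `H_n(G; A)`, defined as the `n`-th left derived functor of the coinvariants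
functor applied to `A`. -/
def groupHomologyRep {k G : Type} [CommRing k] [Group G] (A : Rep.{0} k G) (n : ℕ) : ModuleCat k :=
  ((coinvariantsFunctor k G).leftDerived n).obj A

section Aux

variable {k G : Type} [CommRing k] [Group G]

/-- The natural endomorphism of the identity functor of `Rep.{0} k G` given on each representation
by `ρ c - 1`, for a central element `c`. -/
def centerAug (c : G) (hc : c ∈ Subgroup.center G) : 𝟭 (Rep.{0} k G) ⟶ 𝟭 (Rep.{0} k G) where
  app A := ConcreteCategory.ofHom (C := Rep.{0} k G) (X := A) (Y := A)
    ⟨(A.ρ c : A →ₗ[k] A) - LinearMap.id, fun g => by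
      rw [LinearMap.sub_comp, LinearMap.comp_sub, LinearMap.id_comp, LinearMap.comp_id,
        ← Module.End.mul_eq_comp, ← Module.End.mul_eq_comp, ← map_mul, ← map_mul,
        Subgroup.mem_center_iff.mp hc g]⟩
  naturality {A B} φ := by
    ext m
    revert m
    intro (m : A)
    change B.ρ c (φ.hom m) - φ.hom m = φ.hom (A.ρ c m - m)
    rw [map_sub, Rep.hom_comm_apply φ c m]

lemma coinvariantsFunctor_map_centerAug (c : G) (hc : c ∈ Subgroup.center G) (A : Rep.{0} k G) :
    (coinvariantsFunctor k G).map ((centerAug c hc).app A) = 0 := by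
  apply ModuleCat.hom_ext
  apply Submodule.linearMap_qext
  ext x
  revert x
  intro (x : A)
  show Submodule.Quotient.mk ((A.ρ c : A →ₗ[k] A) x - x) = (0 : A ⧸ augmentationSubmodule A)
  rw [Submodule.Quotient.mk_eq_zero]
  exact Submodule.subset_span ⟨c, x, rfl⟩

lemma leftDerived_map_centerAug (c : G) (hc : c ∈ Subgroup.center G) (n : ℕ) (A : Rep.{0} k G) :
    ((coinvariantsFunctor k G).leftDerived n).map ((centerAug c hc).app A) = 0 := by
  let P : CategoryTheory.ProjectiveResolution A := CategoryTheory.projectiveResolution A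
  let g : P.complex ⟶ P.complex :=
    { f := fun i => (centerAug c hc).app _
      comm' := fun i j _ => ((centerAug c hc).naturality (P.complex.d i j)).symm }
  have w : g ≫ P.π = P.π ≫ (ChainComplex.single₀ (Rep.{0} k G)).map ((centerAug c hc).app A) := by
    apply HomologicalComplex.to_single_hom_ext
    rw [HomologicalComplex.comp_f, HomologicalComplex.comp_f,
      ChainComplex.single₀_map_f_zero]
    exact ((centerAug c hc).naturality (P.π.f 0)).symm
  rw [Functor.leftDerived_map_eq (coinvariantsFunctor k G) n ((centerAug c hc).app A) g w]
  have hg : ((coinvariantsFunctor k G).mapHomologicalComplex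
      (ComplexShape.down ℕ)).map g = 0 := by
    apply HomologicalComplex.hom_ext
    intro i
    show (coinvariantsFunctor k G).map ((centerAug c hc).app (P.complex.X i)) = _
    rw [coinvariantsFunctor_map_centerAug c hc (P.complex.X i)]
    rfl
  rw [Functor.comp_map, hg, Functor.map_zero, Limits.zero_comp, Limits.comp_zero]

end Aux

/-- **Center kills homology.**  Let `G` be a group, `k` a field of characteristic `0`, and `M`
a finite-dimensional `k`-vector space with a linear `G`-action.  If some central element `c` of
`G` fixes no nonzero vector of `M`, then the group homology `H_n(G; M)` vanishes for all `n`. -/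
theorem groupHomology_eq_zero_of_central_element
    (G : Type) [Group G] (k : Type) [Field k] [CharZero k]
    (M : Type) [AddCommGroup M] [Module k M] [FiniteDimensional k M]
    (ρ : Representation k G M)
    (c : G) (hc : c ∈ Subgroup.center G) (hfix : ∀ m : M, m ≠ 0 → ρ c m ≠ m) :
    ∀ n : ℕ, Subsingleton (groupHomologyRep (Rep.of ρ) n) := by
  intro n
  set A : Rep.{0} k G := Rep.of ρ with hA
  let f : A ⟶ A := (centerAug c hc).app A
  let φ : M →ₗ[k] M := (ρ c : M →ₗ[k] M) - LinearMap.id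
  have hinj : Function.Injective φ := by
    rw [← LinearMap.ker_eq_bot, LinearMap.ker_eq_bot']
    intro m hm
    by_contra h
    have hm' : ρ c m - m = 0 := hm
    exact hfix m h (sub_eq_zero.mp hm')
  have hbij : Function.Bijective φ :=
    ⟨hinj, (LinearMap.injective_iff_surjective).mp hinj⟩
  haveI : IsIso ((forget (Rep.{0} k G)).map f) := (isIso_iff_bijective _).mpr hbij
  haveI : IsIso f := isIso_of_reflects_iso f (forget (Rep.{0} k G))
  haveI : IsIso (((coinvariantsFunctor k G).leftDerived n).map f) := Functor.map_isIso _ f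
  have hzero : ((coinvariantsFunctor k G).leftDerived n).map f = 0 :=
    leftDerived_map_centerAug c hc n A
  have hid : 𝟙 (groupHomologyRep A n) = 0 := by
    change 𝟙 (((coinvariantsFunctor k G).leftDerived n).obj A) = 0
    rw [← IsIso.inv_hom_id (((coinvariantsFunctor k G).leftDerived n).map f)]
    nth_rewrite 2 [hzero]
    exact Limits.comp_zero
  have key : ∀ a : groupHomologyRep A n, a = 0 := by
    intro a
    calc a = (𝟙 (groupHomologyRep A n) : groupHomologyRep A n ⟶ groupHomologyRep A n) a :=
          (ModuleCat.id_apply _ a).symm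
    _ = (0 : groupHomologyRep A n ⟶ groupHomologyRep A n) a := by rw [hid]
    _ = 0 := rfl
  exact ⟨fun a b => by rw [key a, key b]⟩

end
end

section
/- Let K be a number field with ring of integers 𝒪, let w_1, …, w_r be the real infinite places and w_{r+1}, …, w_{r+s} the complex infinite places of K, and let 𝒪_1^× denote the group of units of 𝒪 of norm 1. Suppose c_1, …, c_{r+s} ∈ ℝ satisfy c_1·log w_1(x) + ⋯ + c_{r+s}·log w_{r+s}(x) = 0 for every x ∈ 𝒪_1^×. Then 2c_1 = 2c_2 = ⋯ = 2c_r = c_{r+1} = ⋯ = c_{r+s}. -/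
open NumberField NumberField.InfinitePlace

/-- Splitting a sum over a fintype at a distinguished element. -/
lemma sum_split_at {α : Type*} [Fintype α] [DecidableEq α] (a : α) (g : α → ℝ) :
    ∑ x, g x = g a + ∑ x : {x // x ≠ a}, g x.1 := by
  rw [← Finset.insert_erase (Finset.mem_univ a),
    Finset.sum_insert (Finset.notMem_erase a _)]
  congr 1
  exact (Finset.sum_subtype _
    (fun x => ⟨Finset.ne_of_mem_erase,
      fun h => Finset.mem_erase_of_ne_of_mem h (Finset.mem_univ x)⟩) g)

open NumberField.Units NumberField.Units.dirichletUnitTheorem in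
/-- Suppose real numbers `c_w`, indexed by the infinite places `w` of a number field `K`,
satisfy `∑ c_w · log w(x) = 0` for every norm-one unit `x` of `𝒪`.  Then
`2c_v = 2c_{v'} = c_w = c_{w'}` for all real places `v, v'` and complex places `w, w'`; this is
expressed uniformly using the multiplicity `mult` (`1` at real places, `2` at complex ones) as
`mult(w)·c_v = mult(v)·c_w` for all places `v, w`. -/
theorem log_coefficients_relation
    (K : Type) [Field K] [NumberField K]
    (c : InfinitePlace K → ℝ)
    (h : ∀ u : (𝓞 K)ˣ, Algebra.norm ℚ (algebraMap (𝓞 K) K u) = 1 →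
      ∑ w : InfinitePlace K, c w * Real.log (w (algebraMap (𝓞 K) K u)) = 0) :
    ∀ v w : InfinitePlace K, (mult w : ℝ) * c v = (mult v : ℝ) * c w := by
  classical
  -- Step 1: the sum vanishes for *every* unit `u`, since `u ^ 2` has norm one.
  have key : ∀ u : (𝓞 K)ˣ,
      ∑ w : InfinitePlace K, c w * Real.log (w (algebraMap (𝓞 K) K u)) = 0 := by
    intro u
    have hu : |Algebra.norm ℚ (algebraMap (𝓞 K) K u : K)| = 1 := NumberField.Units.norm K u
    have hsq : (Algebra.norm ℚ (algebraMap (𝓞 K) K u : K)) ^ 2 = 1 := by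
      rcases (abs_eq (by norm_num : (0:ℚ) ≤ 1)).mp hu with h1 | h1 <;> rw [h1] <;> norm_num
    have hn : Algebra.norm ℚ (algebraMap (𝓞 K) K ↑(u ^ 2)) = 1 := by
      have hcoe : ((u ^ 2 : (𝓞 K)ˣ) : 𝓞 K) = (u : 𝓞 K) ^ 2 := rfl
      rw [hcoe, map_pow, map_pow, hsq]
    have h2 := h (u ^ 2) hn
    have hlog : ∀ w : InfinitePlace K,
        Real.log (w (algebraMap (𝓞 K) K ↑(u ^ 2))) =
          2 * Real.log (w (algebraMap (𝓞 K) K ↑u)) := by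
      intro w
      have hcoe : ((u ^ 2 : (𝓞 K)ˣ) : 𝓞 K) = (u : 𝓞 K) ^ 2 := rfl
      rw [hcoe, map_pow, map_pow, Real.log_pow]
      push_cast; ring
    simp_rw [hlog] at h2
    have h3 : (2 : ℝ) * ∑ w : InfinitePlace K,
        c w * Real.log (w (algebraMap (𝓞 K) K ↑u)) = 0 := by
      rw [Finset.mul_sum, ← h2]
      exact Finset.sum_congr rfl fun w _ => by ring
    linarith
  -- The normalized coefficients.
  set d : InfinitePlace K → ℝ := fun w => c w / (mult w : ℝ) with hd
  have hmult : ∀ w : InfinitePlace K, ((mult w : ℝ)) ≠ 0 := fun w => by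
    exact_mod_cast (mult_ne_zero : mult w ≠ 0)
  have hdc : ∀ w : InfinitePlace K, d w * (mult w : ℝ) = c w := fun w => by
    rw [hd]; field_simp
  -- Step 2: the linear functional `x ↦ ∑ (d w - d w₀) * x w` vanishes on the unit lattice.
  let f : ({w : InfinitePlace K // w ≠ w₀} → ℝ) →ₗ[ℝ] ℝ :=
    { toFun := fun x => ∑ w : {w : InfinitePlace K // w ≠ w₀}, (d w.1 - d w₀) * x w
      map_add' := by
        intro x y
        simp [mul_add, Finset.sum_add_distrib]
      map_smul' := by
        intro r x
        simp only [Pi.smul_apply, smul_eq_mul, RingHom.id_apply, Finset.mul_sum]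
        exact Finset.sum_congr rfl fun w _ => by ring }
  have hker : (unitLattice K : Set ({w : InfinitePlace K // w ≠ w₀} → ℝ)) ⊆
      (LinearMap.ker f : Set _) := by
    rintro x hx
    obtain ⟨u', -, rfl⟩ := hx
    set u : (𝓞 K)ˣ := Additive.toMul u' with hu'
    simp only [SetLike.mem_coe, LinearMap.mem_ker]
    show ∑ w : {w : InfinitePlace K // w ≠ w₀},
        (d w.1 - d w₀) * logEmbedding K (Additive.ofMul u) w = 0
    have hsum := sum_logEmbedding_component (K := K) u
    have hall := key u
    rw [sum_split_at (w₀ : InfinitePlace K)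
      (fun w => c w * Real.log (w (algebraMap (𝓞 K) K ↑u)))] at hall
    simp only [logEmbedding_component] at hsum ⊢
    have expand : ∀ w : {w : InfinitePlace K // w ≠ w₀},
        (d w.1 - d w₀) * ((mult w.1 : ℝ) * Real.log (w.1 (algebraMap (𝓞 K) K ↑u))) =
          c w.1 * Real.log (w.1 (algebraMap (𝓞 K) K ↑u)) -
            d w₀ * ((mult w.1 : ℝ) * Real.log (w.1 (algebraMap (𝓞 K) K ↑u))) := by
      intro w
      rw [← hdc w.1]; ring
    rw [Finset.sum_congr rfl (fun w _ => expand w), Finset.sum_sub_distrib,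
      ← Finset.mul_sum, hsum]
    have hw0 : d (w₀ : InfinitePlace K) * (mult (w₀ : InfinitePlace K) : ℝ) =
      c (w₀ : InfinitePlace K) := hdc _
    linear_combination hall + Real.log ((w₀ : InfinitePlace K) ((algebraMap (𝓞 K) K) ↑u)) * hw0
  have hfzero : ∀ x, f x = 0 := by
    have hktop : LinearMap.ker f = ⊤ := by
      rw [eq_top_iff, ← unitLattice_span_eq_top K]
      exact Submodule.span_le.mpr hker
    intro x
    exact LinearMap.mem_ker.mp (hktop ▸ Submodule.mem_top (x := x))
  -- Step 3: evaluate at coordinate vectors to get `d w = d w₀` for all `w`.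
  have hdw : ∀ w : InfinitePlace K, d w = d (w₀ : InfinitePlace K) := by
    intro w
    by_cases hw : w = w₀
    · rw [hw]
    · have h0 : ∑ w' : {w' : InfinitePlace K // w' ≠ w₀},
          (d w'.1 - d w₀) * (Pi.single ⟨w, hw⟩ 1 : _ → ℝ) w' = 0 := hfzero _
      rw [Finset.sum_eq_single (⟨w, hw⟩ : {w' : InfinitePlace K // w' ≠ w₀})] at h0
      · simpa [sub_eq_zero] using h0
      · intro b _ hb
        rw [Pi.single_apply, if_neg (by exact fun hbb => hb hbb), mul_zero]
      · intro hmem; exact absurd (Finset.mem_univ _) hmem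
  intro v w
  have hvw : d v = d w := by rw [hdw v, hdw w]
  calc (mult w : ℝ) * c v = (mult w : ℝ) * (d v * (mult v : ℝ)) := by rw [hdc v]
    _ = (mult v : ℝ) * (d w * (mult w : ℝ)) := by rw [hvw]; ring
    _ = (mult v : ℝ) * c w := by rw [hdc w]
end

section
/- Let K be a number field of degree N over ℚ having at least one real embedding, with ring of integers 𝒪, and let σ_1, …, σ_N : K → ℂ be the N distinct field embeddings of K into ℂ. Let d_1, …, d_N ∈ ℤ be integers such that σ_1(u)^{d_1} · σ_2(u)^{d_2} ⋯ σ_N(u)^{d_N} = 1 for every norm-1 unit u ∈ 𝒪_1^×. Then d_1 = d_2 = ⋯ = d_N. -/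
/-!
The exponent vectors `e` with `∏ σ, σ u ^ e σ = 1` for all norm-one units `u` form a subgroup
containing the constant vectors. Taking `log ‖·‖` and testing against the unit of Dirichlet's
theorem that is small at every place but one shows that a conjugation-invariant vector of the
subgroup is constant; applied to `e + e ∘ conjugate` this gives `e σ + e σ̄ = 2 e σ₀` for a real
embedding `σ₀`. The subgroup is moreover stable under the transitive action on embeddings of the
endomorphisms of `ℚ̄`. If `e σ₀ = 0` and `|e|` is maximal at `t`, twisting `e` so that `σ₀`
goes to `t` produces an embedding where `e` takes the value `2 * e t`, so `e t = 0`.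
-/

open NumberField

theorem exists_ringHom_comp_algebraMap_eq {F E M : Type*} [Field F] [Field E] [Field M]
    [IsAlgClosed M] [Algebra F E] [Algebra.IsAlgebraic F E] (τ : F →+* M) :
    ∃ g : E →+* M, g.comp (algebraMap F E) = τ := by
  let := τ.toAlgebra
  exact ⟨(IsAlgClosed.lift : E →ₐ[F] M).toRingHom, RingHom.ext (IsAlgClosed.lift).commutes⟩

theorem Finset.eq_zero_of_sum_mul_eq_zero {ι R : Type*} [Ring R] [LinearOrder R]
    [IsStrictOrderedRing R] {s : Finset ι} {a b : ι → R} (ha : ∀ i ∈ s, a i ≤ 0)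
    (hab : ∀ i ∈ s, a i = 0 ∨ b i < 0) (h : ∑ i ∈ s, a i * b i = 0) : ∀ i ∈ s, a i = 0 := by
  have hnonneg : ∀ i ∈ s, 0 ≤ a i * b i := fun i hi =>
    (hab i hi).elim (fun h0 => by simp [h0]) fun hb =>
      mul_nonneg_of_nonpos_of_nonpos (ha i hi) hb.le
  intro i hi
  refine (hab i hi).elim id fun hb => ?_
  exact (mul_eq_zero.mp ((Finset.sum_eq_zero_iff_of_nonneg hnonneg).mp h i hi)).resolve_right
    hb.ne

namespace NumberField

variable (K : Type*) [Field K] [NumberField K] (L : Type*) [Field L] [CharZero L]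

def normOneUnitRelations : AddSubgroup ((K →+* L) → ℤ) where
  carrier := {e | ∀ u : (𝓞 K)ˣ, Algebra.norm ℚ (algebraMap (𝓞 K) K u) = 1 →
    ∏ σ : K →+* L, σ (algebraMap (𝓞 K) K u) ^ e σ = 1}
  zero_mem' _ _ := by simp
  add_mem' {e f} he hf u hu := by
    have hne (σ : K →+* L) : σ (algebraMap (𝓞 K) K u) ≠ 0 :=
      (u.isUnit.map (σ.comp (algebraMap (𝓞 K) K))).ne_zero
    simp only [Pi.add_apply, zpow_add₀ (hne _), Finset.prod_mul_distrib, he u hu, hf u hu,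
      mul_one]
  neg_mem' {e} he u hu := by
    simp only [Pi.neg_apply, zpow_neg, Finset.prod_inv_distrib, he u hu, inv_one]

variable {K L}

theorem Embeddings.comp_left_bijective {L' : Type*} [Field L'] [CharZero L'] [IsAlgClosed L]
    [IsAlgClosed L'] (g : L →+* L') :
    Function.Bijective fun σ : K →+* L => g.comp σ := by
  rw [Fintype.bijective_iff_injective_and_card, Embeddings.card K L, Embeddings.card K L']
  exact ⟨fun σ τ h => RingHom.ext fun x => g.injective (RingHom.congr_fun h x), rfl⟩

theorem comp_mem_normOneUnitRelations_iff {L' : Type*} [Field L'] [CharZero L'] (g : L →+* L')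
    (hg : Function.Bijective fun σ : K →+* L => g.comp σ) {e : (K →+* L') → ℤ} :
    (fun σ => e (g.comp σ)) ∈ normOneUnitRelations K L ↔ e ∈ normOneUnitRelations K L' := by
  refine forall₂_congr fun u _ => ?_
  rw [← g.injective.eq_iff, map_one, map_prod]
  simp only [map_zpow₀]
  exact Iff.of_eq (congrArg (· = 1)
    (Fintype.prod_bijective _ hg _ (fun τ => τ (algebraMap (𝓞 K) K u) ^ e τ) fun _ => rfl))

theorem const_mem_normOneUnitRelations [IsAlgClosed L] (n : ℤ) :
    (fun _ => n) ∈ normOneUnitRelations K L := by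
  intro u hu
  rw [Finset.prod_zpow, Fintype.prod_equiv (RingHom.equivRatAlgHom K L)
    (fun σ => σ (algebraMap (𝓞 K) K u)) (fun φ => φ (algebraMap (𝓞 K) K u)) fun _ => rfl,
    ← Algebra.norm_eq_prod_embeddings, hu, map_one, one_zpow]

theorem sum_mul_log_norm_eq_zero {e : (K →+* ℂ) → ℤ} (he : e ∈ normOneUnitRelations K ℂ)
    (u : (𝓞 K)ˣ) (hu : Algebra.norm ℚ (algebraMap (𝓞 K) K u) = 1) :
    ∑ σ : K →+* ℂ, (e σ : ℝ) * Real.log ‖σ (algebraMap (𝓞 K) K u)‖ = 0 := by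
  have hne (σ : K →+* ℂ) : ‖σ (algebraMap (𝓞 K) K u)‖ ≠ 0 :=
    norm_ne_zero_iff.mpr (u.isUnit.map (σ.comp (algebraMap (𝓞 K) K))).ne_zero
  have := congrArg (fun z : ℂ => Real.log ‖z‖) (he u hu)
  simp only [norm_prod, norm_zpow, norm_one, Real.log_one,
    Real.log_prod fun σ _ => zpow_ne_zero _ (hne σ), Real.log_zpow] at this
  exact this

open ComplexEmbedding in
theorem eq_of_mem_normOneUnitRelations_of_conjugate {e : (K →+* ℂ) → ℤ}
    (he : e ∈ normOneUnitRelations K ℂ) (hconj : ∀ σ, e (conjugate σ) = e σ)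
    (σ τ : K →+* ℂ) : e σ = e τ := by
  obtain ⟨σm, -, hmax⟩ := Finset.exists_max_image Finset.univ e ⟨σ, Finset.mem_univ σ⟩
  suffices h : ∀ τ, e τ = e σm by rw [h σ, h τ]
  -- a unit that is small at every place but `mk σm`; its square has norm one
  obtain ⟨u, hu⟩ := Units.dirichletUnitTheorem.exists_unit K (InfinitePlace.mk σm)
  have hnorm : Algebra.norm ℚ (algebraMap (𝓞 K) K ↑(u ^ 2)) = 1 := by
    rw [Units.val_pow_eq_pow_val, map_pow, map_pow, ← sq_abs]
    simp
  have hsmall (τ : K →+* ℂ) (hτ : InfinitePlace.mk τ ≠ InfinitePlace.mk σm) :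
      Real.log ‖τ (algebraMap (𝓞 K) K ↑(u ^ 2))‖ < 0 := by
    rw [Units.val_pow_eq_pow_val, map_pow, map_pow, norm_pow, Real.log_pow]
    have := hu (InfinitePlace.mk τ) hτ
    rw [InfinitePlace.apply] at this
    push_cast
    linarith
  have hsum := sum_mul_log_norm_eq_zero
    (sub_mem he (const_mem_normOneUnitRelations (e σm))) (u ^ 2) hnorm
  intro τ
  have := Finset.eq_zero_of_sum_mul_eq_zero (s := Finset.univ)
    (fun τ _ => by simpa using hmax τ (Finset.mem_univ τ)) (fun τ _ => ?_) hsum τ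
    (Finset.mem_univ τ)
  · simpa [sub_eq_zero] using this
  by_cases hτ : InfinitePlace.mk τ = InfinitePlace.mk σm
  · left
    rcases InfinitePlace.mk_eq_iff.mp hτ with rfl | rfl <;> simp [hconj]
  · exact .inr (hsmall τ hτ)

open ComplexEmbedding in
theorem add_conjugate_eq_two_mul_of_isReal {e : (K →+* ℂ) → ℤ}
    (he : e ∈ normOneUnitRelations K ℂ) {σ₀ : K →+* ℂ} (hσ₀ : IsReal σ₀) (σ : K →+* ℂ) :
    e σ + e (conjugate σ) = 2 * e σ₀ := by
  -- `conjugate τ` unfolds to `(starRingEnd ℂ).comp τ`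
  have hconj : (fun τ => e (conjugate τ)) ∈ normOneUnitRelations K ℂ :=
    (comp_mem_normOneUnitRelations_iff (starRingEnd ℂ) (Embeddings.comp_left_bijective _)).mpr he
  have := eq_of_mem_normOneUnitRelations_of_conjugate (add_mem he hconj)
    (fun τ => by simp [add_comm]) σ σ₀
  simpa [isReal_iff.mp hσ₀, two_mul] using this

theorem exists_ringHom_comp_eq {L : Type*} [Field L] [IsAlgClosed L] [Algebra ℚ L]
    [Algebra.IsAlgebraic ℚ L] (σ τ : K →+* L) : ∃ g : L →+* L, g.comp σ = τ := by
  let := σ.toAlgebra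
  have : IsScalarTower ℚ K L := IsScalarTower.of_algebraMap_eq' (Subsingleton.elim _ _)
  have : Algebra.IsAlgebraic K L := Algebra.IsAlgebraic.tower_top (K := ℚ) K
  exact exists_ringHom_comp_algebraMap_eq τ

theorem exists_perm_apply_eq_comp_mem [IsAlgClosed L] {e : (K →+* L) → ℤ}
    (he : e ∈ normOneUnitRelations K L) (σ τ : K →+* L) :
    ∃ π : Equiv.Perm (K →+* L), π σ = τ ∧ e ∘ π ∈ normOneUnitRelations K L := by
  -- instance search finds `DivisionRing.toRatAlgebra`, not the structure `isAlgebraic` is about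
  have : Algebra.IsAlgebraic ℚ (AlgebraicClosure ℚ) :=
    Subsingleton.elim (α := Algebra ℚ (AlgebraicClosure ℚ)) (AlgebraicClosure.instAlgebra ℚ)
      DivisionRing.toRatAlgebra ▸ AlgebraicClosure.isAlgebraic ℚ
  obtain ⟨j⟩ : Nonempty (AlgebraicClosure ℚ →+* L) := inferInstance
  let J := Equiv.ofBijective _ (Embeddings.comp_left_bijective (K := K) j)
  obtain ⟨g, hg⟩ := exists_ringHom_comp_eq (J.symm σ) (J.symm τ)
  let G := Equiv.ofBijective _ (Embeddings.comp_left_bijective (K := K) g)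
  refine ⟨J.symm.trans (G.trans J), ?_, ?_⟩
  · simp [G, hg]
  · rw [← comp_mem_normOneUnitRelations_iff j J.bijective,
      ← comp_mem_normOneUnitRelations_iff g G.bijective] at he
    rw [← comp_mem_normOneUnitRelations_iff j J.bijective]
    convert he using 2 with s
    simp [G, J]

open ComplexEmbedding in
theorem eq_zero_of_mem_normOneUnitRelations_of_isReal {e : (K →+* ℂ) → ℤ}
    (he : e ∈ normOneUnitRelations K ℂ) {σ₀ : K →+* ℂ} (hσ₀ : IsReal σ₀) (h0 : e σ₀ = 0) :
    e = 0 := by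
  obtain ⟨t, -, hmax⟩ :=
    Finset.exists_max_image Finset.univ (fun σ => |e σ|) ⟨σ₀, Finset.mem_univ σ₀⟩
  obtain ⟨π, hπ, hπe⟩ := exists_perm_apply_eq_comp_mem he σ₀ t
  have hdouble := add_conjugate_eq_two_mul_of_isReal hπe hσ₀ (π.symm σ₀)
  simp only [Function.comp_apply, Equiv.apply_symm_apply, h0, hπ, zero_add] at hdouble
  have ht : e t = 0 := by
    have := hmax _ (Finset.mem_univ (π (conjugate (π.symm σ₀))))
    rw [hdouble, abs_mul, abs_two] at this
    exact abs_nonpos_iff.mp (by linarith)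
  funext σ
  simpa [ht] using hmax σ (Finset.mem_univ σ)

end NumberField

/-- Let `K` be a number field with at least one real embedding.  If integers `d_σ`, indexed by
the field embeddings `σ : K → ℂ`, satisfy `∏_σ σ(u)^{d_σ} = 1` for every norm-one unit `u` of
`𝒪`, then all the `d_σ` are equal. -/
theorem unit_character_exponents_equal
    (K : Type) [Field K] [NumberField K]
    (hreal : ∃ σ : K →+* ℂ, ComplexEmbedding.IsReal σ)
    (d : (K →+* ℂ) → ℤ)
    (h : ∀ u : (𝓞 K)ˣ, Algebra.norm ℚ (algebraMap (𝓞 K) K u) = 1 →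
      ∏ σ : K →+* ℂ, σ (algebraMap (𝓞 K) K u) ^ d σ = 1) :
    ∀ σ τ : K →+* ℂ, d σ = d τ := by
  obtain ⟨σ₀, hσ₀⟩ := hreal
  have hd : d ∈ normOneUnitRelations K ℂ := h
  have hzero := eq_zero_of_mem_normOneUnitRelations_of_isReal
    (sub_mem hd (const_mem_normOneUnitRelations (d σ₀))) hσ₀ (sub_self _)
  have hconst (σ : K →+* ℂ) : d σ = d σ₀ := sub_eq_zero.mp (congrFun hzero σ)
  exact fun σ τ => (hconst σ).trans (hconst τ).symm
end

section
/- Let K be a number field of degree N over ℚ having at least one real embedding, with ring of integers 𝒪, and let σ_1, …, σ_N : K → ℂ be the N distinct field embeddings of K into ℂ. Let P be a polynomial in N variables with real coefficients such that P(σ_1(u), …, σ_N(u)) = 0 for every norm-1 unit u ∈ 𝒪_1^×. Then P lies in the ideal of ℝ[X_1, …, X_N] generated by X_1·X_2⋯X_N − 1. -/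
open NumberField

section AuxiliaryLemmas

variable {K : Type} [Field K] [NumberField K]

lemma prod_embeddings_eq_norm (x : K) :
    ∏ σ : K →+* ℂ, σ x = algebraMap ℚ ℂ (Algebra.norm ℚ x) := by
  rw [Algebra.norm_eq_prod_embeddings]
  exact Fintype.prod_equiv (RingHom.equivRatAlgHom K ℂ) _ _ (fun σ => rfl)

lemma norm_sq_one' (u : (𝓞 K)ˣ) :
    Algebra.norm ℚ (algebraMap (𝓞 K) K ↑(u ^ 2)) = 1 := by
  have h := NumberField.Units.norm K u
  have h2 : algebraMap (𝓞 K) K ↑(u ^ 2) = (algebraMap (𝓞 K) K ↑u) ^ 2 := by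
    push_cast; ring
  rw [h2, map_pow, ← sq_abs]
  rw [← NumberField.RingOfIntegers.coe_eq_algebraMap] at *
  rw [h]; norm_num

open NumberField.InfinitePlace NumberField.Units NumberField.Units.dirichletUnitTheorem in
lemma rel_real_coord {σr : K →+* ℂ} (hσr : ComplexEmbedding.IsReal σr)
    (d : (K →+* ℂ) → ℤ)
    (hd : ∀ u : (𝓞 K)ˣ, Algebra.norm ℚ (algebraMap (𝓞 K) K ↑u) = 1 →
      ∏ σ : K →+* ℂ, σ (algebraMap (𝓞 K) K ↑u) ^ d σ = 1) :
    (d σr : ℝ) * (Module.finrank ℚ K) = ∑ σ : K →+* ℂ, (d σ : ℝ) := by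
  classical
  -- Step 1 : log relation
  have hlog : ∀ u : (𝓞 K)ˣ,
      ∑ σ : K →+* ℂ, (d σ : ℝ) * Real.log (‖σ (u : K)‖) = 0 := by
    intro u
    have h1 := hd (u ^ 2) (norm_sq_one' u)
    have hco : algebraMap (𝓞 K) K ↑(u ^ 2) = ((u : K)) ^ 2 := by push_cast; ring
    rw [hco] at h1
    have h2 := congrArg (‖·‖) h1
    rw [norm_prod, norm_one] at h2
    simp_rw [norm_zpow, map_pow, norm_pow] at h2
    have hne : ∀ σ : K →+* ℂ, σ (u : K) ≠ 0 := fun σ =>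
      (map_ne_zero σ).mpr (Units.coe_ne_zero u)
    have h3 := congrArg Real.log h2
    rw [Real.log_prod (by
      intro σ _
      exact zpow_ne_zero _ (pow_ne_zero _ (norm_ne_zero_iff.mpr (hne σ)))),
      Real.log_one] at h3
    simp_rw [Real.log_zpow, Real.log_pow] at h3
    have h4 : (2 : ℝ) * ∑ σ : K →+* ℂ, (d σ : ℝ) * Real.log (‖σ (u : K)‖) = 0 := by
      rw [Finset.mul_sum]
      rw [← h3]
      refine Finset.sum_congr rfl (fun σ _ => by push_cast; ring)
    have := mul_eq_zero.mp h4
    simpa using this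
  -- Step 2 : fiberwise sums over infinite places
  set c : InfinitePlace K → ℝ :=
    fun w => ∑ σ ∈ Finset.univ.filter (fun σ => InfinitePlace.mk σ = w), (d σ : ℝ) with hc
  have hsum : ∀ u : (𝓞 K)ˣ,
      ∑ w : InfinitePlace K, c w * Real.log (w (u : K)) = 0 := by
    intro u
    rw [← hlog u, ← Finset.sum_fiberwise Finset.univ (fun σ : K →+* ℂ => InfinitePlace.mk σ)
      (fun σ => (d σ : ℝ) * Real.log (‖σ (u : K)‖))]
    refine Finset.sum_congr rfl (fun w _ => ?_)
    rw [hc, Finset.sum_mul]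
    refine Finset.sum_congr rfl (fun σ hσ => ?_)
    have hmk : InfinitePlace.mk σ = w := (Finset.mem_filter.mp hσ).2
    rw [← hmk, InfinitePlace.apply]
  -- Step 3 : product formula in log form
  have hprodlog : ∀ u : (𝓞 K)ˣ,
      ∑ w : InfinitePlace K, (mult w : ℝ) * Real.log (w (u : K)) = 0 := by
    intro u
    have h1 := congrArg Real.log (prod_eq_abs_norm (u : K))
    rw [NumberField.Units.norm K u] at h1
    rw [Real.log_prod (fun w _ => pow_ne_zero _
      (ne_of_gt (pos_iff.mpr (Units.coe_ne_zero u))))] at h1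
    simp_rw [Real.log_pow] at h1
    simpa using h1
  -- Step 4 : Dirichlet's unit theorem
  set t : ℝ := c w₀ / (mult (w₀ : InfinitePlace K) : ℝ) with ht
  have hkey : ∀ w : InfinitePlace K, c w = t * (mult w : ℝ) := by
    have hφ0 : ∀ w : {w : InfinitePlace K // w ≠ w₀},
        c w.1 / (mult w.1 : ℝ) - t = 0 := by
      let e : {w : InfinitePlace K // w ≠ w₀} → ℝ := fun w => c w.1 / (mult w.1 : ℝ) - t
      let φ : ({w : InfinitePlace K // w ≠ w₀} → ℝ) →ₗ[ℝ] ℝ :=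
        { toFun := fun x => ∑ w, e w * x w
          map_add' := by
            intro x y; simp [mul_add, Finset.sum_add_distrib]
          map_smul' := by
            intro m x; simp [Finset.mul_sum]; refine Finset.sum_congr rfl (fun w _ => by ring) }
      have hker : ∀ u : (𝓞 K)ˣ, φ (logEmbedding K (Additive.ofMul u)) = 0 := by
        intro u
        have hms : ∀ w : {w : InfinitePlace K // w ≠ w₀},
            e w * (logEmbedding K (Additive.ofMul u) w)
              = c w.1 * Real.log (w.1 (u : K)) - t * ((mult w.1 : ℝ) * Real.log (w.1 (u : K))) := by
          intro w
          rw [logEmbedding_component]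
          have hmne : (mult w.1 : ℝ) ≠ 0 := Nat.cast_ne_zero.mpr mult_ne_zero
          have hdm : c w.1 / (mult w.1 : ℝ) * (mult w.1 : ℝ) = c w.1 := div_mul_cancel₀ _ hmne
          simp only [e]
          linear_combination Real.log (w.1 (u : K)) * hdm
        show (∑ w, e w * (logEmbedding K (Additive.ofMul u)) w) = 0
        rw [Finset.sum_congr rfl (fun w _ => hms w), Finset.sum_sub_distrib, ← Finset.mul_sum]
        -- now relate subtype sums to full sums
        have hsub : ∀ f : InfinitePlace K → ℝ,
            ∑ w : {w : InfinitePlace K // w ≠ w₀}, f w.1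
              = (∑ w : InfinitePlace K, f w) - f w₀ := by
          intro f
          rw [← Finset.sum_subtype (Finset.univ.erase w₀)
            (fun w => by simp [Finset.mem_erase]) f]
          rw [Finset.sum_erase_eq_sub (Finset.mem_univ w₀)]
        rw [hsub (fun w => c w * Real.log (w (u : K))),
          hsub (fun w => (mult w : ℝ) * Real.log (w (u : K))), hsum u, hprodlog u]
        have hmne : (mult (w₀ : InfinitePlace K) : ℝ) ≠ 0 := Nat.cast_ne_zero.mpr mult_ne_zero
        have hdm : c w₀ / (mult (w₀ : InfinitePlace K) : ℝ) * (mult (w₀ : InfinitePlace K) : ℝ) = c w₀ :=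
          div_mul_cancel₀ _ hmne
        rw [ht]
        linear_combination Real.log (w₀ (u : K)) * hdm
      have hspan : ∀ x : ({w : InfinitePlace K // w ≠ w₀} → ℝ), φ x = 0 := by
        intro x
        have hx : x ∈ Submodule.span ℝ (unitLattice K : Set ({w : InfinitePlace K // w ≠ w₀} → ℝ)) := by
          rw [unitLattice_span_eq_top]; trivial
        refine Submodule.span_induction ?_ ?_ ?_ ?_ hx
        · rintro y ⟨u, _, rfl⟩
          exact hker u
        · simp
        · intro y z _ _ hy hz; rw [map_add, hy, hz, add_zero]
        · intro a y _ hy; rw [map_smul, hy, smul_zero]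
      intro w
      have := hspan (Pi.single w 1)
      have hφs : φ (Pi.single w 1) = e w := by
        show (∑ w', e w' * (Pi.single w 1 : _ → ℝ) w') = e w
        rw [Finset.sum_eq_single w]
        · simp
        · intro w' _ hne; simp [Pi.single_apply, hne]
        · intro hw; exact absurd (Finset.mem_univ w) hw
      rw [hφs] at this
      exact this
    intro w
    by_cases hw : w = w₀
    · rw [hw, ht]
      have hmne : (mult (w₀ : InfinitePlace K) : ℝ) ≠ 0 := Nat.cast_ne_zero.mpr mult_ne_zero
      field_simp
    · have := hφ0 ⟨w, hw⟩
      have hmne : (mult w : ℝ) ≠ 0 := Nat.cast_ne_zero.mpr mult_ne_zero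
      have h1 : c w / (mult w : ℝ) = t := by linarith
      rw [← h1]; field_simp
  -- Step 5 : conclude
  have hfib : Finset.univ.filter (fun σ : K →+* ℂ => InfinitePlace.mk σ = InfinitePlace.mk σr)
      = {σr} := by
    ext ψ
    simp only [Finset.mem_filter, Finset.mem_univ, true_and, Finset.mem_singleton]
    constructor
    · intro hmk
      rcases mk_eq_iff.mp hmk with h | h
      · exact h
      · have h2 := congrArg (fun f : K →+* ℂ => ComplexEmbedding.conjugate f) h
        rw [ComplexEmbedding.isReal_iff.mp hσr] at h2
        rw [← h2]
        exact (star_star ψ).symm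
    · rintro rfl; rfl
  have hreal : InfinitePlace.IsReal (InfinitePlace.mk σr) := isReal_mk_iff.mpr hσr
  have hmult1 : mult (InfinitePlace.mk σr) = 1 := by rw [mult, if_pos hreal]
  have h1 : (d σr : ℝ) = c (InfinitePlace.mk σr) := by
    simp only [hc]
    rw [hfib, Finset.sum_singleton]
  have h2 : ∑ σ : K →+* ℂ, (d σ : ℝ) = ∑ w : InfinitePlace K, c w := by
    rw [← Finset.sum_fiberwise Finset.univ (fun σ : K →+* ℂ => InfinitePlace.mk σ)
      (fun σ => (d σ : ℝ))]
  have h3 : ∑ w : InfinitePlace K, c w = t * (Module.finrank ℚ K : ℝ) := by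
    rw [Finset.sum_congr rfl (fun w _ => hkey w), ← Finset.mul_sum]
    congr 1
    exact_mod_cast sum_mult_eq (K := K)
  rw [h1, h2, h3, hkey (InfinitePlace.mk σr), hmult1]
  push_cast
  ring


lemma exists_transport (τ σ' : K →+* ℂ) :
    ∃ e : (K →+* ℂ) ≃ (K →+* ℂ), e τ = σ' ∧
      ∀ (d : (K →+* ℂ) → ℤ) (x : K),
        (∏ σ : K →+* ℂ, σ x ^ d σ = 1) → (∏ σ : K →+* ℂ, (e σ) x ^ d σ = 1) := by
  classical
  set L := IntermediateField.normalClosure ℚ K ℂ with hL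
  have hmem : ∀ (σ : K →+* ℂ) (x : K), σ x ∈ L := fun σ x =>
    σ.toRatAlgHom.fieldRange_le_normalClosure ⟨x, rfl⟩
  let hat : (K →+* ℂ) → (K →+* L) := fun σ => σ.codRestrict L.toSubfield (hmem σ)
  have hat_coe : ∀ (σ : K →+* ℂ) (x : K), ((hat σ x : L) : ℂ) = σ x := fun σ x => rfl
  letI : Algebra K L := (hat τ).toAlgebra
  letI : Algebra K ℂ := σ'.toAlgebra
  haveI : IsScalarTower ℚ K L := IsScalarTower.of_algebraMap_eq' (Subsingleton.elim _ _)
  haveI : Algebra.IsAlgebraic ℚ L := Algebra.IsAlgebraic.of_finite ℚ L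
  haveI : Algebra.IsAlgebraic K L := Algebra.IsAlgebraic.tower_top (K := ℚ) K
  let g : L →ₐ[K] ℂ := IsAlgClosed.lift
  have hg : Function.Injective g := g.toRingHom.injective
  let F : (K →+* ℂ) → (K →+* ℂ) := fun σ => g.toRingHom.comp (hat σ)
  have hinj : Function.Injective F := by
    intro σ₁ σ₂ hσ
    ext x
    have h1 : g (hat σ₁ x) = g (hat σ₂ x) := congrArg (fun f : K →+* ℂ => f x) hσ
    have h2 : hat σ₁ x = hat σ₂ x := hg h1
    have := congrArg (fun z : L => (z : ℂ)) h2
    simpa [hat_coe] using this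
  have hbij := Finite.injective_iff_bijective.mp hinj
  refine ⟨Equiv.ofBijective F hbij, ?_, ?_⟩
  · ext x
    show g (hat τ x) = σ' x
    exact g.commutes x
  · intro d x hx
    have hLprod : ∏ σ : K →+* ℂ, (hat σ x) ^ d σ = 1 := by
      apply L.val.toRingHom.injective
      rw [map_prod, map_one]
      simp_rw [map_zpow₀]
      exact hx
    have := congrArg g hLprod
    rw [map_prod, map_one] at this
    simp_rw [map_zpow₀ g] at this
    exact this


lemma rel_const {K : Type} [Field K] [NumberField K]
    (hreal : ∃ σ : K →+* ℂ, ComplexEmbedding.IsReal σ)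
    (d : (K →+* ℂ) → ℤ)
    (hd : ∀ u : (𝓞 K)ˣ, Algebra.norm ℚ (algebraMap (𝓞 K) K ↑u) = 1 →
      ∏ σ : K →+* ℂ, σ (algebraMap (𝓞 K) K ↑u) ^ d σ = 1)
    (σ τ : K →+* ℂ) : d σ = d τ := by
  obtain ⟨σr, hσr⟩ := hreal
  have key : ∀ τ' : K →+* ℂ,
      (d τ' : ℝ) * (Module.finrank ℚ K) = ∑ σ' : K →+* ℂ, (d σ' : ℝ) := by
    intro τ'
    obtain ⟨e, heτ, he⟩ := exists_transport τ' σr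
    set d' : (K →+* ℂ) → ℤ := fun σ' => d (e.symm σ') with hd'def
    have hd' : ∀ u : (𝓞 K)ˣ, Algebra.norm ℚ (algebraMap (𝓞 K) K ↑u) = 1 →
        ∏ σ' : K →+* ℂ, σ' (algebraMap (𝓞 K) K ↑u) ^ d' σ' = 1 := by
      intro u hu
      have h1 := he d (algebraMap (𝓞 K) K ↑u) (hd u hu)
      rw [← Equiv.prod_comp e
        (fun σ' : K →+* ℂ => σ' (algebraMap (𝓞 K) K ↑u) ^ d' σ')]
      simp only [hd'def, Equiv.symm_apply_apply]
      exact h1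
    have hB := rel_real_coord hσr d' hd'
    have hd'σr : d' σr = d τ' := by simp only [hd'def, ← heτ, Equiv.symm_apply_apply]
    have hsum : ∑ σ' : K →+* ℂ, (d' σ' : ℝ) = ∑ σ' : K →+* ℂ, (d σ' : ℝ) := by
      rw [← Equiv.sum_comp e (fun σ' : K →+* ℂ => (d' σ' : ℝ))]
      simp [hd'def]
    rw [hd'σr, hsum] at hB
    exact hB
  have hN : (0:ℝ) < (Module.finrank ℚ K : ℝ) := by
    exact_mod_cast Module.finrank_pos
  have : (d σ : ℝ) = (d τ : ℝ) :=
    mul_right_cancel₀ (ne_of_gt hN) ((key σ).trans (key τ).symm)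
  exact_mod_cast this


end AuxiliaryLemmas

/-- Let `K` be a number field with at least one real embedding.  If a real polynomial `p` in
variables indexed by the field embeddings `σ : K → ℂ` satisfies `p(σ₁(u),…,σ_N(u)) = 0` for
every norm-one unit `u` of `𝓞`, then `p` lies in the ideal generated by `X₁⋯X_N − 1`. -/
theorem polynomial_vanishing_on_norm_one_units
    (K : Type) [Field K] [NumberField K]
    (hreal : ∃ σ : K →+* ℂ, ComplexEmbedding.IsReal σ)
    (p : MvPolynomial (K →+* ℂ) ℝ)
    (h : ∀ u : (𝓞 K)ˣ, Algebra.norm ℚ (algebraMap (𝓞 K) K u) = 1 →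
      MvPolynomial.aeval (fun σ : K →+* ℂ => σ (algebraMap (𝓞 K) K u)) p = 0) :
    p ∈ Ideal.span {(∏ σ : K →+* ℂ, MvPolynomial.X σ : MvPolynomial (K →+* ℂ) ℝ) - 1} := by
  classical
  obtain ⟨σr, hσr⟩ := hreal
  haveI : Nonempty (K →+* ℂ) := ⟨σr⟩
  set f : MvPolynomial (K →+* ℂ) ℝ := (∏ σ : K →+* ℂ, MvPolynomial.X σ) - 1 with hf
  -- the all-ones exponent
  set oneF : (K →+* ℂ) →₀ ℕ := Finsupp.equivFunOnFinite.symm (fun _ => 1) with honeF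
  have honeF_apply : ∀ σ : K →+* ℂ, oneF σ = 1 := fun σ => rfl
  have hXprod : (∏ σ : K →+* ℂ, (MvPolynomial.X σ : MvPolynomial (K →+* ℂ) ℝ))
      = MvPolynomial.monomial oneF 1 := by
    rw [← MvPolynomial.prod_X_pow_eq_monomial]
    have hsupp : oneF.support = Finset.univ := by
      ext σ; simp [Finsupp.mem_support_iff, honeF_apply]
    rw [hsupp]
    exact Finset.prod_congr rfl (fun σ _ => by rw [honeF_apply, pow_one])
  -- monomials are congruent to their reductions mod f
  have hmono : ∀ (k : ℕ) (a : (K →+* ℂ) →₀ ℕ) (cc : ℝ),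
      MvPolynomial.monomial (a + k • oneF) cc - MvPolynomial.monomial a cc ∈
        Ideal.span {f} := by
    intro k
    induction k with
    | zero => intro a cc; simp
    | succ k ih =>
      intro a cc
      have step : MvPolynomial.monomial (a + k • oneF + oneF) cc
          - MvPolynomial.monomial (a + k • oneF) cc
          = MvPolynomial.monomial (a + k • oneF) cc * f := by
        rw [hf, mul_sub, mul_one, hXprod, MvPolynomial.monomial_mul, mul_one]
      have hstep2 : a + (k + 1) • oneF = (a + k • oneF) + oneF := by
        rw [succ_nsmul, add_assoc]
      rw [hstep2]
      have hsplit : MvPolynomial.monomial ((a + k • oneF) + oneF) cc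
            - MvPolynomial.monomial a cc
          = (MvPolynomial.monomial ((a + k • oneF) + oneF) cc
              - MvPolynomial.monomial (a + k • oneF) cc)
            + (MvPolynomial.monomial (a + k • oneF) cc - MvPolynomial.monomial a cc) := by
        ring
      rw [hsplit]
      refine Ideal.add_mem _ ?_ (ih a cc)
      rw [step]
      exact Ideal.mul_mem_left _ _ (Ideal.subset_span (Set.mem_singleton f))
  -- minimum exponent and reduction
  have hne : (Finset.univ : Finset (K →+* ℂ)).Nonempty := Finset.univ_nonempty
  set mina : ((K →+* ℂ) →₀ ℕ) → ℕ := fun a => Finset.inf' Finset.univ hne a with hmina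
  set red : ((K →+* ℂ) →₀ ℕ) → ((K →+* ℂ) →₀ ℕ) :=
    fun a => Finsupp.equivFunOnFinite.symm (fun σ => a σ - mina a) with hredd
  have hred_apply : ∀ a σ, red a σ = a σ - mina a := fun a σ => rfl
  have hdecomp : ∀ a, a = red a + (mina a) • oneF := by
    intro a
    ext σ
    have hle : mina a ≤ a σ := Finset.inf'_le _ (Finset.mem_univ σ)
    rw [Finsupp.add_apply, Finsupp.smul_apply, hred_apply, honeF_apply, smul_eq_mul, mul_one]
    omega
  -- the reduced polynomial
  set r : MvPolynomial (K →+* ℂ) ℝ :=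
    ∑ a ∈ p.support, MvPolynomial.monomial (red a) (MvPolynomial.coeff a p) with hr
  have hpr : p - r ∈ Ideal.span {f} := by
    have hps : p - r = ∑ a ∈ p.support,
        (MvPolynomial.monomial a (MvPolynomial.coeff a p)
          - MvPolynomial.monomial (red a) (MvPolynomial.coeff a p)) := by
      rw [Finset.sum_sub_distrib, MvPolynomial.support_sum_monomial_coeff p, ← hr]
    rw [hps]
    refine Ideal.sum_mem _ (fun a _ => ?_)
    have := hmono (mina a) (red a) (MvPolynomial.coeff a p)
    rwa [← hdecomp a] at this
  have hrsupp : ∀ b ∈ r.support, ∃ σ, b σ = 0 := by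
    intro b hb
    rw [hr] at hb
    have h1 := MvPolynomial.support_sum hb
    obtain ⟨a, _, hb2⟩ := Finset.mem_biUnion.mp h1
    have hb3 : b = red a := by
      have := MvPolynomial.support_monomial (s := red a) (a := MvPolynomial.coeff a p) ▸ hb2
      by_cases hc : MvPolynomial.coeff a p = 0
      · rw [if_pos hc] at this; exact absurd this (Finset.notMem_empty b)
      · rw [if_neg hc] at this; exact Finset.mem_singleton.mp this
    obtain ⟨σ0, _, hσ0⟩ := Finset.exists_mem_eq_inf' hne (a : (K →+* ℂ) → ℕ)
    refine ⟨σ0, ?_⟩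
    rw [hb3, hred_apply]
    have hm : mina a = a σ0 := hσ0
    omega
  -- evaluations of r vanish at norm-one units
  have hfeval : ∀ u : (𝓞 K)ˣ, Algebra.norm ℚ (algebraMap (𝓞 K) K ↑u) = 1 →
      MvPolynomial.aeval (fun σ : K →+* ℂ => σ (algebraMap (𝓞 K) K ↑u)) r = 0 := by
    intro u hu
    obtain ⟨q, hq⟩ := Ideal.mem_span_singleton'.mp hpr
    have hfz : MvPolynomial.aeval (fun σ : K →+* ℂ => σ (algebraMap (𝓞 K) K ↑u)) f = 0 := by
      rw [hf, map_sub, map_one, map_prod]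
      simp only [MvPolynomial.aeval_X]
      rw [prod_embeddings_eq_norm, hu]
      simp
    have h1 : MvPolynomial.aeval (fun σ : K →+* ℂ => σ (algebraMap (𝓞 K) K ↑u)) (p - r) = 0 := by
      rw [← hq, map_mul, hfz, mul_zero]
    rw [map_sub, h u hu, zero_sub, neg_eq_zero] at h1
    exact h1
  -- the group of norm-one units
  set G : Submonoid (𝓞 K)ˣ :=
    { carrier := {u : (𝓞 K)ˣ | Algebra.norm ℚ (algebraMap (𝓞 K) K ↑u) = 1}
      one_mem' := by simp
      mul_mem' := by
        intro a b ha hb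
        simp only [Set.mem_setOf_eq] at *
        rw [Units.val_mul, map_mul, map_mul, ha, hb, mul_one] } with hG
  -- characters
  set χ : ((K →+* ℂ) →₀ ℕ) → (G →* ℂ) := fun b =>
    { toFun := fun u => ∏ σ : K →+* ℂ, (σ (algebraMap (𝓞 K) K ↑(u : (𝓞 K)ˣ))) ^ b σ
      map_one' := by simp
      map_mul' := by
        intro u v
        simp only [Submonoid.coe_mul, Units.val_mul, map_mul, mul_pow,
          Finset.prod_mul_distrib] } with hχ
  have hχ_apply : ∀ (b : (K →+* ℂ) →₀ ℕ) (u : G),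
      χ b u = ∏ σ : K →+* ℂ, (σ (algebraMap (𝓞 K) K ↑(u : (𝓞 K)ˣ))) ^ b σ := fun b u => rfl
  -- injectivity of χ on the support of r
  have hχinj : ∀ b₁ ∈ r.support, ∀ b₂ ∈ r.support, χ b₁ = χ b₂ → b₁ = b₂ := by
    intro b₁ h1 b₂ h2 hbb
    set dd : (K →+* ℂ) → ℤ := fun σ => (b₁ σ : ℤ) - (b₂ σ : ℤ) with hdd
    have hda : ∀ u : (𝓞 K)ˣ, Algebra.norm ℚ (algebraMap (𝓞 K) K ↑u) = 1 →
        ∏ σ : K →+* ℂ, σ (algebraMap (𝓞 K) K ↑u) ^ dd σ = 1 := by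
      intro u hu
      have hx : ∀ σ : K →+* ℂ, σ (algebraMap (𝓞 K) K ↑u) ≠ 0 := fun σ => by
        rw [map_ne_zero σ, ← NumberField.RingOfIntegers.coe_eq_algebraMap]
        exact NumberField.Units.coe_ne_zero u
      have heq := congrArg (fun φ : ↥G →* ℂ => φ ⟨u, hu⟩) hbb
      simp only [hχ_apply] at heq
      have hsplit : ∀ σ : K →+* ℂ, σ (algebraMap (𝓞 K) K ↑u) ^ dd σ
          = (σ (algebraMap (𝓞 K) K ↑u)) ^ (b₁ σ) / ((σ (algebraMap (𝓞 K) K ↑u)) ^ (b₂ σ)) := by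
        intro σ
        rw [hdd, zpow_sub₀ (hx σ), zpow_natCast, zpow_natCast]
      rw [Finset.prod_congr rfl (fun σ _ => hsplit σ), Finset.prod_div_distrib, heq, div_self]
      exact Finset.prod_ne_zero_iff.mpr (fun σ _ => pow_ne_zero _ (hx σ))
    have hconst := rel_const ⟨σr, hσr⟩ dd hda
    obtain ⟨σ1, hσ1⟩ := hrsupp b₁ h1
    obtain ⟨σ2, hσ2⟩ := hrsupp b₂ h2
    have e12 := hconst σ1 σ2
    have hall : ∀ σ, dd σ = 0 := by
      intro σ
      have h1' := hconst σ σ1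
      have h2' := hconst σ σ2
      simp only [hdd] at h1' h2' e12 ⊢
      omega
    ext σ
    have := hall σ
    simp only [hdd] at this
    omega
  -- linear independence of characters
  have hli := linearIndependent_monoidHom (↥G) ℂ
  have hli2 : LinearIndependent ℂ
      (fun b : {b : (K →+* ℂ) →₀ ℕ // b ∈ r.support} => ((χ b.1 : ↥G →* ℂ) : ↥G → ℂ)) :=
    hli.comp (fun b : {b // b ∈ r.support} => χ b.1)
      (fun b₁ b₂ hb => Subtype.ext (hχinj _ b₁.2 _ b₂.2 hb))
  have hzero : ∑ b : {b : (K →+* ℂ) →₀ ℕ // b ∈ r.support},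
      ((MvPolynomial.coeff b.1 r : ℝ) : ℂ) • ((χ b.1 : ↥G →* ℂ) : ↥G → ℂ) = 0 := by
    funext u
    obtain ⟨u0, hu0⟩ := u
    simp only [Finset.sum_apply, Pi.smul_apply, smul_eq_mul, Pi.zero_apply]
    have he := hfeval u0 hu0
    rw [MvPolynomial.aeval_def, MvPolynomial.eval₂_eq] at he
    rw [Finset.sum_coe_sort r.support
      (fun b => (((MvPolynomial.coeff b r : ℝ) : ℂ)) * (χ b ⟨u0, hu0⟩))]
    rw [← he]
    refine Finset.sum_congr rfl (fun b _ => ?_)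
    simp only [hχ_apply]
    have hps : ∏ σ : K →+* ℂ, σ (algebraMap (𝓞 K) K ↑u0) ^ b σ
        = ∏ σ ∈ b.support, σ (algebraMap (𝓞 K) K ↑u0) ^ b σ :=
      (Finset.prod_subset (Finset.subset_univ b.support)
        (fun i _ hi => by rw [Finsupp.notMem_support_iff.mp hi, pow_zero])).symm
    rw [hps]
    norm_num [Complex.coe_algebraMap]
  have hcoeff := Fintype.linearIndependent_iff.mp hli2
    (fun b => ((MvPolynomial.coeff b.1 r : ℝ) : ℂ)) hzero
  have hr0 : r = 0 := by
    by_contra hrne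
    obtain ⟨b, hb⟩ := (MvPolynomial.support_nonempty.mpr hrne)
    have := hcoeff ⟨b, hb⟩
    simp only [Complex.ofReal_eq_zero] at this
    exact (MvPolynomial.mem_support_iff.mp hb) this
  rw [hr0, sub_zero] at hpr
  exact hpr
end

section
/- Let 𝒪 be the ring of integers in a number field K, let Q be a rank-n projective 𝒪-module with n ≥ 1, and let 𝔉 be any flag in Q ⊗_𝒪 K (possibly the empty flag). Then the determinant map GL(Q,𝔉) → 𝒪^×, sending f to det(f ⊗ 1_K) (which lies in 𝒪^×), is surjective. -/
open NumberField TensorProduct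

noncomputable section


lemma noZeroSMulDivisors_localizedModule
    {R M : Type*} [CommRing R] [IsDomain R] [AddCommGroup M] [Module R M]
    [NoZeroSMulDivisors R M] (P : Ideal R) [P.IsPrime] :
    NoZeroSMulDivisors (Localization.AtPrime P) (LocalizedModule P.primeCompl M) := by
  constructor
  intro c x hcx
  induction c using Localization.induction_on with
  | H p =>
    obtain ⟨r, s⟩ := p
    induction x using LocalizedModule.induction_on with
    | h m t =>
      rw [LocalizedModule.mk_smul_mk] at hcx
      have h0 : (LocalizedModule.mk (r • m) (s * t) : LocalizedModule P.primeCompl M)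
          = LocalizedModule.mk 0 1 := by simpa using hcx
      obtain ⟨c', hc'⟩ := LocalizedModule.mk_eq.mp h0
      simp only [smul_zero, one_smul] at hc'
      have hc0 : ((c' : R) * r) • m = 0 := by
        rw [mul_smul]
        simpa [Submonoid.smul_def] using hc'
      rcases smul_eq_zero.mp hc0 with h | h
      · rcases mul_eq_zero.mp h with h' | h'
        · exact absurd h' (fun hh => c'.2 (hh ▸ P.zero_mem))
        · left
          rw [h', Localization.mk_zero]
      · right
        rw [h, LocalizedModule.zero_mk]

lemma projective_of_torsionFree (R M : Type*) [CommRing R] [IsDedekindDomain R]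
    (hF : ¬IsField R) [AddCommGroup M] [Module R M] [Module.Finite R M]
    [NoZeroSMulDivisors R M] : Module.Projective R M := by
  have : Module.FinitePresentation R M := Module.finitePresentation_of_finite R M
  apply Module.projective_of_localization_maximal
  intro I hI
  have hbot : I ≠ ⊥ := Ring.ne_bot_of_isMaximal_of_not_isField hI hF
  haveI : IsDiscreteValuationRing (Localization.AtPrime I) :=
    IsLocalization.AtPrime.isDiscreteValuationRing_of_dedekind_domain R hbot _
  haveI := noZeroSMulDivisors_localizedModule (M := M) I
  haveI : Module.Finite (Localization.AtPrime I) (LocalizedModule I.primeCompl M) :=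
    Module.Finite.of_isLocalizedModule I.primeCompl (LocalizedModule.mkLinearMap I.primeCompl M)
  infer_instance


lemma exists_smul_eq_tmul (K : Type) [Field K] [NumberField K] (Q : Type)
    [AddCommGroup Q] [Module (𝓞 K) Q] (x : K ⊗[𝓞 K] Q) :
    ∃ (d : 𝓞 K) (q : Q), d ≠ 0 ∧ d • x = (1 : K) ⊗ₜ[𝓞 K] q := by
  induction x using TensorProduct.induction_on with
  | zero => exact ⟨1, 0, one_ne_zero, by simp⟩
  | tmul k q =>
    obtain ⟨⟨a, b⟩, hk⟩ := IsLocalization.mk'_surjective (nonZeroDivisors (𝓞 K)) k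
    refine ⟨b, a • q, nonZeroDivisors.coe_ne_zero b, ?_⟩
    have h1 : (b : 𝓞 K) • k = algebraMap (𝓞 K) K a := by
      rw [Algebra.smul_def, ← hk, IsLocalization.mul_mk'_eq_mk'_of_mul,
        IsLocalization.mk'_mul_cancel_left]
    calc (b : 𝓞 K) • (k ⊗ₜ[𝓞 K] q) = ((b : 𝓞 K) • k) ⊗ₜ[𝓞 K] q := by
          rw [TensorProduct.smul_tmul']
      _ = (algebraMap (𝓞 K) K a) ⊗ₜ[𝓞 K] q := by rw [h1]
      _ = (1 : K) ⊗ₜ[𝓞 K] (a • q) := by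
          rw [TensorProduct.tmul_smul, TensorProduct.smul_tmul', Algebra.smul_def, mul_one]
  | add x y hx hy =>
    obtain ⟨d1, q1, h1, e1⟩ := hx
    obtain ⟨d2, q2, h2, e2⟩ := hy
    refine ⟨d1 * d2, d2 • q1 + d1 • q2, mul_ne_zero h1 h2, ?_⟩
    rw [smul_add, TensorProduct.tmul_add, mul_comm d1 d2, mul_smul, e1, mul_comm d2 d1,
      mul_smul, e2, TensorProduct.tmul_smul, TensorProduct.tmul_smul]
/-- The stabilizer of a family of submodules inside the units of an endomorphism ring. -/
def endUnitsStab (R V : Type) [CommRing R] [AddCommGroup V] [Module R V] {m : ℕ}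
    (F : Fin m → Submodule R V) : Subgroup (Module.End R V)ˣ where
  carrier := {f | ∀ i, (F i).map (f : Module.End R V) = F i}
  one_mem' := by
    intro i
    rw [Units.val_one, Module.End.one_eq_id, Submodule.map_id]
  mul_mem' := by
    intro a b ha hb i
    rw [Units.val_mul, Module.End.mul_eq_comp, Submodule.map_comp, hb i, ha i]
  inv_mem' := by
    intro a ha i
    conv_lhs => rw [← ha i]
    rw [← Submodule.map_comp, ← Module.End.mul_eq_comp, ← Units.val_mul, inv_mul_cancel,
      Units.val_one, Module.End.one_eq_id, Submodule.map_id]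

/-- `GL(Q)` acting on `Q ⊗ K = K ⊗[𝓞 K] Q` by base change. -/
def endBaseChangeUnits (K : Type) [Field K] [NumberField K] (Q : Type) [AddCommGroup Q]
    [Module (𝓞 K) Q] : (Module.End (𝓞 K) Q)ˣ →* (Module.End K (K ⊗[𝓞 K] Q))ˣ :=
  Units.map (Module.End.baseChangeHom (𝓞 K) K Q).toRingHom.toMonoidHom

/-- `GL(Q, 𝔉)`: the subgroup of `GL(Q)` preserving each subspace of a flag `𝔉` in `Q ⊗ K`. -/
def moduleFlagStab (K : Type) [Field K] [NumberField K] (Q : Type) [AddCommGroup Q]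
    [Module (𝓞 K) Q] {m : ℕ} (F : Fin m → Submodule K (K ⊗[𝓞 K] Q)) :
    Subgroup (Module.End (𝓞 K) Q)ˣ :=
  (endUnitsStab K (K ⊗[𝓞 K] Q) F).comap (endBaseChangeUnits K Q)

set_option maxHeartbeats 1000000 in
/-- **Surjectivity of the determinant on flag stabilizers.**  Let `𝒪` be the ring of integers
in a number field `K`, let `Q` be a rank-`n` projective `𝒪`-module with `n ≥ 1`, and let `𝔉`
be any flag in `Q ⊗ K` (possibly empty).  Then the determinant map `GL(Q,𝔉) → 𝒪ˣ`,
`f ↦ det(f ⊗ 1_K)`, is surjective. -/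
theorem det_surjective_on_flag_stabilizer
    (K : Type) [Field K] [NumberField K]
    (Q : Type) [AddCommGroup Q] [Module (𝓞 K) Q]
    [Module.Finite (𝓞 K) Q] [Module.Projective (𝓞 K) Q]
    (n : ℕ) (hn : 1 ≤ n) (hrank : Module.finrank K (K ⊗[𝓞 K] Q) = n)
    {m : ℕ} (F : Fin m → Submodule K (K ⊗[𝓞 K] Q))
    (hmono : StrictMono F) (hbot : ∀ i, F i ≠ ⊥) (htop : ∀ i, F i ≠ ⊤) :
    ∀ u : (𝓞 K)ˣ, ∃ g ∈ moduleFlagStab K Q F,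
      LinearMap.det (((g : (Module.End (𝓞 K) Q)ˣ) : Module.End (𝓞 K) Q).baseChange K) =
        algebraMap (𝓞 K) K u := by
  intro u
  classical
  -- Step 1: find a nonzero vector in all members of the flag
  obtain ⟨v, hv0, hvF⟩ : ∃ v : K ⊗[𝓞 K] Q, v ≠ 0 ∧ ∀ i, v ∈ F i := by
    have hnt : Nontrivial (K ⊗[𝓞 K] Q) := by
      apply Module.nontrivial_of_finrank_pos (R := K)
      omega
    cases m with
    | zero =>
      obtain ⟨v, hv⟩ := exists_ne (0 : K ⊗[𝓞 K] Q)
      exact ⟨v, hv, fun i => i.elim0⟩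
    | succ k =>
      obtain ⟨v, hv, hv0⟩ := (Submodule.ne_bot_iff _).mp (hbot 0)
      exact ⟨v, hv0, fun i => hmono.monotone (Fin.zero_le i) hv⟩
  -- Step 2: clear denominators
  obtain ⟨d, q₀, hd0, hdv⟩ := exists_smul_eq_tmul K Q v
  set w : K ⊗[𝓞 K] Q := (1 : K) ⊗ₜ[𝓞 K] q₀ with hw
  have hdK : algebraMap (𝓞 K) K d ≠ 0 := by
    simpa using (map_ne_zero_iff _ (IsFractionRing.injective (𝓞 K) K)).mpr hd0
  have hdv' : algebraMap (𝓞 K) K d • v = w := by rw [algebraMap_smul]; exact hdv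
  have hw0 : w ≠ 0 := by
    rw [← hdv']
    exact smul_ne_zero hdK hv0
  have hwF : ∀ i, w ∈ F i := fun i => by
    rw [← hdv']; exact Submodule.smul_mem _ _ (hvF i)
  -- Step 3: the saturated rank-one submodule N
  set ι : Q →ₗ[𝓞 K] K ⊗[𝓞 K] Q := TensorProduct.mk (𝓞 K) K Q 1 with hι
  set N : Submodule (𝓞 K) Q := (Submodule.restrictScalars (𝓞 K) (K ∙ w)).comap ι with hN
  have hNmem : ∀ q : Q, q ∈ N ↔ ((1 : K) ⊗ₜ[𝓞 K] q) ∈ (K ∙ w) := fun q => Iff.rfl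
  have hq₀N : q₀ ∈ N := (hNmem q₀).mpr (Submodule.mem_span_singleton_self w)
  -- Step 4: the quotient is torsion-free, hence projective
  haveI : NoZeroSMulDivisors (𝓞 K) (Q ⧸ N) := by
    refine ⟨fun {c x} hcx => ?_⟩
    by_cases hc : c = 0
    · exact Or.inl hc
    right
    obtain ⟨q, rfl⟩ := Submodule.Quotient.mk_surjective N x
    rw [← Submodule.Quotient.mk_smul, Submodule.Quotient.mk_eq_zero] at hcx
    rw [Submodule.Quotient.mk_eq_zero]
    have h1 : (1 : K) ⊗ₜ[𝓞 K] (c • q) ∈ (K ∙ w) := (hNmem _).mp hcx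
    rw [TensorProduct.tmul_smul, ← algebraMap_smul K c ((1 : K) ⊗ₜ[𝓞 K] q)] at h1
    have hcK : algebraMap (𝓞 K) K c ≠ 0 := by
      simpa using (map_ne_zero_iff _ (IsFractionRing.injective (𝓞 K) K)).mpr hc
    have h2 := (K ∙ w).smul_mem (algebraMap (𝓞 K) K c)⁻¹ h1
    rw [inv_smul_smul₀ hcK] at h2
    exact (hNmem q).mpr h2
  haveI : Module.Finite (𝓞 K) (Q ⧸ N) :=
    Module.Finite.of_surjective N.mkQ (Submodule.Quotient.mk_surjective N)
  haveI : Module.Projective (𝓞 K) (Q ⧸ N) :=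
    projective_of_torsionFree (𝓞 K) (Q ⧸ N) (RingOfIntegers.not_isField K)
  -- Step 5: the projection π onto N
  obtain ⟨σ, hσ⟩ := Module.projective_lifting_property N.mkQ LinearMap.id
    (Submodule.Quotient.mk_surjective N)
  set π : Module.End (𝓞 K) Q := LinearMap.id - σ ∘ₗ N.mkQ with hπ
  have hπN : ∀ q : Q, π q ∈ N := by
    intro q
    have h1 : N.mkQ (π q) = 0 := by
      have h2 := LinearMap.congr_fun hσ (N.mkQ q)
      simp only [LinearMap.coe_comp, Function.comp_apply, LinearMap.id_coe, id_eq] at h2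
      simp only [hπ, LinearMap.sub_apply, LinearMap.coe_comp, Function.comp_apply,
        LinearMap.id_coe, id_eq, map_sub, h2, sub_self]
    rwa [Submodule.mkQ_apply, Submodule.Quotient.mk_eq_zero] at h1
  have hπid : ∀ q ∈ N, π q = q := by
    intro q hq
    have h1 : N.mkQ q = 0 := by rwa [Submodule.mkQ_apply, Submodule.Quotient.mk_eq_zero]
    simp [hπ, LinearMap.sub_apply, h1]
  -- Step 6: base change of π
  have hπB_mem : ∀ x : K ⊗[𝓞 K] Q, π.baseChange K x ∈ (K ∙ w) := by
    intro x
    induction x using TensorProduct.induction_on with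
    | zero => simp
    | tmul k q =>
      rw [LinearMap.baseChange_tmul]
      have h1 : k ⊗ₜ[𝓞 K] (π q) = k • ((1 : K) ⊗ₜ[𝓞 K] (π q)) := by
        rw [TensorProduct.smul_tmul', smul_eq_mul, mul_one]
      rw [h1]
      exact Submodule.smul_mem _ k ((hNmem _).mp (hπN q))
    | add x y hx hy => rw [map_add]; exact add_mem hx hy
  have hπBw : π.baseChange K w = w := by
    rw [hw, LinearMap.baseChange_tmul, hπid q₀ hq₀N]
  -- Step 7: the unit g = 1 + (u-1)π
  have hmul : ∀ x y : 𝓞 K, ((1 : Module.End (𝓞 K) Q) + x • π) * (1 + y • π)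
      = 1 + (x + y + x * y) • π := by
    intro x y
    have hππ : π * π = π := LinearMap.ext fun q => hπid (π q) (hπN q)
    rw [add_mul, mul_add, mul_add, one_mul, one_mul, mul_one, smul_mul_smul_comm, hππ]
    rw [add_smul, add_smul]
    abel
  set a : 𝓞 K := (u : 𝓞 K) - 1 with ha
  set b : 𝓞 K := ((u⁻¹ : (𝓞 K)ˣ) : 𝓞 K) - 1 with hb
  have hab : a + b + a * b = 0 := by
    have h1 : (u : 𝓞 K) * ((u⁻¹ : (𝓞 K)ˣ) : 𝓞 K) = 1 := Units.mul_inv u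
    rw [ha, hb]
    ring_nf
    linear_combination h1
  set g : Module.End (𝓞 K) Q := 1 + a • π with hg
  set g' : Module.End (𝓞 K) Q := 1 + b • π with hg'
  have hgg' : g * g' = 1 := by
    rw [hg, hg', hmul, hab, zero_smul, add_zero]
  have hg'g : g' * g = 1 := by
    rw [hg, hg', hmul, show b + a + b * a = 0 by linear_combination hab, zero_smul, add_zero]
  set gu : (Module.End (𝓞 K) Q)ˣ := ⟨g, g', hgg', hg'g⟩ with hgu
  -- Step 8: pointwise formula for base change
  have hbase : ∀ (x : 𝓞 K) (z : K ⊗[𝓞 K] Q),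
      ((1 + x • π : Module.End (𝓞 K) Q).baseChange K) z
        = z + algebraMap (𝓞 K) K x • (π.baseChange K z) := by
    intro x z
    rw [LinearMap.baseChange_add, LinearMap.baseChange_smul, LinearMap.baseChange_one,
      LinearMap.add_apply, LinearMap.smul_apply, Module.End.one_apply, algebraMap_smul]
  -- Step 9: flag stabilization
  have hstab : ∀ (x : 𝓞 K) (i : Fin m),
      Submodule.map ((1 + x • π : Module.End (𝓞 K) Q).baseChange K) (F i) ≤ F i := by
    intro x i
    rintro _ ⟨z, hz, rfl⟩
    rw [hbase]
    refine (F i).add_mem hz (Submodule.smul_mem _ _ ?_)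
    exact Submodule.span_le.mpr (Set.singleton_subset_iff.mpr (hwF i)) (hπB_mem z)
  refine ⟨gu, ?_, ?_⟩
  · -- membership in the flag stabilizer
    have hval : ((endBaseChangeUnits K Q gu : (Module.End K (K ⊗[𝓞 K] Q))ˣ)
        : Module.End K (K ⊗[𝓞 K] Q)) = g.baseChange K := rfl
    show endBaseChangeUnits K Q gu ∈ endUnitsStab K (K ⊗[𝓞 K] Q) F
    show ∀ i, (F i).map ((endBaseChangeUnits K Q gu : (Module.End K (K ⊗[𝓞 K] Q))ˣ)
        : Module.End K (K ⊗[𝓞 K] Q)) = F i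
    intro i
    rw [hval]
    refine le_antisymm (by rw [hg]; exact hstab a i) ?_
    intro z hz
    have hz' : g'.baseChange K z ∈ F i := by
      refine hstab b i ?_
      rw [← hg']
      exact ⟨z, hz, rfl⟩
    refine ⟨g'.baseChange K z, hz', ?_⟩
    have h2 : ((g * g').baseChange K) z = z := by
      rw [hgg', LinearMap.baseChange_one, Module.End.one_apply]
    rwa [LinearMap.baseChange_mul, Module.End.mul_apply] at h2
  · -- the determinant computation
    have hval2 : ((gu : (Module.End (𝓞 K) Q)ˣ) : Module.End (𝓞 K) Q) = g := rfl
    rw [hval2]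
    haveI : Module.Finite K (K ⊗[𝓞 K] Q) := Module.Finite.base_change (𝓞 K) K Q
    set bV := Module.Free.chooseBasis K (K ⊗[𝓞 K] Q) with hbV
    have hex : ∀ j, ∃ t : K, t • w = π.baseChange K (bV j) := fun j =>
      Submodule.mem_span_singleton.mp (hπB_mem (bV j))
    choose t ht using hex
    have hgb : ∀ j, (g.baseChange K) (bV j) = bV j + (algebraMap (𝓞 K) K a * t j) • w := by
      intro j; rw [hg, hbase, ← ht j, smul_smul]
    have hsum : ∑ j, bV.repr w j * t j = 1 := by
      have h1 : (∑ j, bV.repr w j * t j) • w = (1 : K) • w := by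
        rw [one_smul, Finset.sum_smul]
        calc ∑ j, (bV.repr w j * t j) • w = ∑ j, bV.repr w j • (t j • w) := by
              simp [mul_smul]
          _ = ∑ j, bV.repr w j • π.baseChange K (bV j) := by simp only [ht]
          _ = π.baseChange K (∑ j, bV.repr w j • bV j) := by rw [map_sum]; simp only [map_smul]
          _ = π.baseChange K w := by rw [Module.Basis.sum_repr]
          _ = w := hπBw
      have h2 : ((∑ j, bV.repr w j * t j) - 1) • w = 0 := by
        rw [sub_smul (M := K ⊗[𝓞 K] Q), h1, sub_self]
      rcases smul_eq_zero.mp h2 with h | h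
      · exact sub_eq_zero.mp h
      · exact absurd h hw0
    rw [← LinearMap.det_toMatrix bV]
    have hmat : LinearMap.toMatrix bV bV (g.baseChange K)
        = 1 + Matrix.replicateCol Unit (fun i => bV.repr w i) * Matrix.replicateRow Unit
            (fun j => algebraMap (𝓞 K) K a * t j) := by
      ext i j
      rw [LinearMap.toMatrix_apply, hgb j, map_add, map_smul, Finsupp.add_apply,
        Finsupp.smul_apply, smul_eq_mul, Module.Basis.repr_self]
      rw [Matrix.add_apply, Matrix.one_apply, Matrix.mul_apply]
      simp [Matrix.replicateCol_apply, Matrix.replicateRow_apply, Finsupp.single_apply, eq_comm]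
      ring
    rw [hmat, Matrix.det_one_add_replicateCol_mul_replicateRow]
    have h3 : dotProduct (fun j => algebraMap (𝓞 K) K a * t j) (fun i => bV.repr w i)
        = algebraMap (𝓞 K) K a := by
      show (∑ j, (algebraMap (𝓞 K) K a * t j) * bV.repr w j) = _
      calc ∑ j, (algebraMap (𝓞 K) K a * t j) * bV.repr w j
          = algebraMap (𝓞 K) K a * ∑ j, bV.repr w j * t j := by
            rw [Finset.mul_sum]
            exact Finset.sum_congr rfl fun j _ => by ring
        _ = algebraMap (𝓞 K) K a := by rw [hsum, mul_one]
    rw [h3, ha, map_sub, map_one]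
    ring





end
end

section
/- Let 𝒪 be the ring of integers in a number field K, let I ⊆ 𝒪 be a nonzero ideal, let n ≥ 1, and let P ⊆ 𝒪^n be the submodule of vectors whose last coordinate lies in I (so P ≅ 𝒪^{n−1} ⊕ I). Let v_1, …, v_n be a free 𝒪-basis of 𝒪^n such that for each i the last coordinate of v_i is congruent to 0 or 1 modulo I, and exactly one index i_0 has last coordinate of v_{i_0} congruent to 1 modulo I. Then P is the internal direct sum of the submodules L_i = P ∩ 𝒪·v_i for i = 1, …, n; that is, P = L_1 ⊕ L_2 ⊕ ⋯ ⊕ L_n. -/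
open NumberField

/-- Let `𝒪` be the ring of integers in a number field `K`, `I ⊆ 𝒪` a nonzero ideal, `n ≥ 1`,
and `P ⊆ 𝒪ⁿ` the submodule of vectors whose last coordinate lies in `I`.  If `v : Fin n → 𝒪ⁿ`
is a free `𝒪`-basis of `𝒪ⁿ` such that every `v i` has last coordinate congruent to `0` or `1`
mod `I`, and exactly one `v i` has last coordinate congruent to `1` mod `I`, then `P` is the
internal direct sum of the submodules `L i = P ∩ 𝒪·(v i)`. -/
theorem basis_gives_line_decomposition
    (K : Type) [Field K] [NumberField K] (I : Ideal (𝓞 K)) (hI : I ≠ ⊥)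
    (n : ℕ) (hn : 1 ≤ n) (last : Fin n) (hlast : (last : ℕ) = n - 1)
    (v : Module.Basis (Fin n) (𝓞 K) (Fin n → 𝓞 K))
    (h01 : ∀ i, v i last ∈ I ∨ v i last - 1 ∈ I)
    (h1 : ∃! i, v i last - 1 ∈ I) :
    iSupIndep (fun i : Fin n =>
        Submodule.comap (LinearMap.proj last : (Fin n → 𝓞 K) →ₗ[𝓞 K] 𝓞 K) I ⊓
          Submodule.span (𝓞 K) {v i}) ∧
      (⨆ i : Fin n,
        Submodule.comap (LinearMap.proj last : (Fin n → 𝓞 K) →ₗ[𝓞 K] 𝓞 K) I ⊓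
          Submodule.span (𝓞 K) {v i}) =
        Submodule.comap (LinearMap.proj last : (Fin n → 𝓞 K) →ₗ[𝓞 K] 𝓞 K) I := by
  classical
  obtain ⟨i0, hi0, huniq⟩ := h1
  have hzero : ∀ i, i ≠ i0 → v i last ∈ I := by
    intro i hi
    rcases h01 i with h | h
    · exact h
    · exact absurd (huniq i h) hi
  constructor
  · exact (v.linearIndependent.iSupIndep_span_singleton).mono fun i => inf_le_right
  · apply le_antisymm (iSup_le fun i => inf_le_left)
    intro x hx
    have hx' : x last ∈ I := hx
    have hrepr := v.sum_repr x
    have hxlast : x last = ∑ i, v.repr x i * v i last := by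
      conv_lhs => rw [← hrepr]
      simp [Finset.sum_apply]
    have hS : ∑ i ∈ Finset.univ.erase i0, v.repr x i * v i last ∈ I :=
      Ideal.sum_mem _ fun i hi => I.mul_mem_left _ (hzero i (Finset.mem_erase.1 hi).1)
    have hsplit : x last = v.repr x i0 * v i0 last
        + ∑ i ∈ Finset.univ.erase i0, v.repr x i * v i last := by
      rw [hxlast, ← Finset.add_sum_erase _ _ (Finset.mem_univ i0)]
    have hci0 : v.repr x i0 * v i0 last ∈ I := by
      have : v.repr x i0 * v i0 last = x last
          - ∑ i ∈ Finset.univ.erase i0, v.repr x i * v i last := by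
        rw [hsplit]; ring
      rw [this]; exact I.sub_mem hx' hS
    have key : ∀ i, v.repr x i * v i last ∈ I := by
      intro i
      by_cases h : i = i0
      · subst h; exact hci0
      · exact I.mul_mem_left _ (hzero i h)
    rw [← hrepr]
    refine Submodule.sum_mem _ fun i _ => Submodule.mem_iSup_of_mem i ⟨?_, ?_⟩
    · show (v.repr x i • v i) last ∈ I
      simpa using key i
    · exact Submodule.smul_mem _ _ (Submodule.mem_span_singleton_self _)
end

section
/- Let Γ be the level-2 principal congruence subgroup of GL_2(ℤ), i.e., the kernel of the reduction homomorphism GL_2(ℤ) → GL_2(𝔽_2). Then every group homomorphism from Γ to the additive group of ℚ is trivial; equivalently, H^1(Γ; ℚ) = 0 and every element of the abelianization of Γ has finite order. -/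
open Matrix

namespace L2C

abbrev G := GL (Fin 2) ℤ

abbrev Γ : Subgroup G :=
  ((Matrix.GeneralLinearGroup.map (Int.castRingHom (ZMod 2)) :
        GL (Fin 2) ℤ →* GL (Fin 2) (ZMod 2))).ker

def Amat (k : ℤ) : G :=
  ⟨!![1, 2*k; 0, 1], !![1, -(2*k); 0, 1],
    by ext i j; fin_cases i <;> fin_cases j <;> simp [Matrix.mul_apply, Fin.sum_univ_two],
    by ext i j; fin_cases i <;> fin_cases j <;> simp [Matrix.mul_apply, Fin.sum_univ_two]⟩

def Bmat (k : ℤ) : G :=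
  ⟨!![1, 0; 2*k, 1], !![1, 0; -(2*k), 1],
    by ext i j; fin_cases i <;> fin_cases j <;> simp [Matrix.mul_apply, Fin.sum_univ_two],
    by ext i j; fin_cases i <;> fin_cases j <;> simp [Matrix.mul_apply, Fin.sum_univ_two]⟩

def Dmat (e₁ e₂ : ℤˣ) : G :=
  ⟨!![(e₁:ℤ), 0; 0, (e₂:ℤ)], !![(e₁:ℤ), 0; 0, (e₂:ℤ)],
    by ext i j; fin_cases i <;> fin_cases j <;>
      simp [Matrix.mul_apply, Fin.sum_univ_two, Int.units_mul_self],
    by ext i j; fin_cases i <;> fin_cases j <;>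
      simp [Matrix.mul_apply, Fin.sum_univ_two, Int.units_mul_self]⟩

lemma mem_iff (g : G) : g ∈ Γ ↔
    ∀ i j, ((g.val i j : ZMod 2)) = (1 : Matrix (Fin 2) (Fin 2) (ZMod 2)) i j := by
  constructor
  · intro h i j
    have h' : (Matrix.GeneralLinearGroup.map (Int.castRingHom (ZMod 2)) :
        GL (Fin 2) ℤ →* GL (Fin 2) (ZMod 2)) g = 1 := h
    have := Matrix.ext_iff.mpr (Units.ext_iff.mp h') i j
    simpa [Matrix.GeneralLinearGroup.map_apply] using this
  · intro h
    refine MonoidHom.mem_ker.mpr ?_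
    ext i j
    simpa [Matrix.GeneralLinearGroup.map_apply] using h i j

lemma Amem (k : ℤ) : Amat k ∈ Γ := by
  rw [mem_iff]
  intro i j; fin_cases i <;> fin_cases j <;> simp [Amat] <;> exact Or.inl (by decide)

lemma Bmem (k : ℤ) : Bmat k ∈ Γ := by
  rw [mem_iff]
  intro i j; fin_cases i <;> fin_cases j <;> simp [Bmat] <;> exact Or.inl (by decide)

lemma Dmem (e₁ e₂ : ℤˣ) : Dmat e₁ e₂ ∈ Γ := by
  rw [mem_iff]
  intro i j; fin_cases i <;> fin_cases j <;>
    rcases Int.units_eq_one_or e₁ with h1 | h1 <;>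
    rcases Int.units_eq_one_or e₂ with h2 | h2 <;>
    simp [Dmat, h1, h2] <;> decide

def Aelt (k : ℤ) : Γ := ⟨Amat k, Amem k⟩
def Belt (k : ℤ) : Γ := ⟨Bmat k, Bmem k⟩
def Delt (e₁ e₂ : ℤˣ) : Γ := ⟨Dmat e₁ e₂, Dmem e₁ e₂⟩

def S : Set Γ := Set.range Aelt ∪ Set.range Belt ∪ {x | ∃ e₁ e₂, x = Delt e₁ e₂}

/- parity of entries of elements of Γ -/
lemma odd_diag (γ : Γ) (i : Fin 2) : Odd ((γ : G).val i i) := by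
  have h := (mem_iff _).mp γ.2 i i
  rw [Int.not_even_iff_odd.symm]
  intro hev
  obtain ⟨t, ht⟩ := hev
  have hdvd : (2:ℤ) ∣ (γ : G).val i i := ⟨t, by omega⟩
  rw [(ZMod.intCast_zmod_eq_zero_iff_dvd _ 2).mpr hdvd] at h
  fin_cases i <;> simp at h <;> exact (by decide : ¬ ((0:ZMod 2) = 1)) h

lemma even_off (γ : Γ) (i j : Fin 2) (hij : i ≠ j) : Even ((γ : G).val i j) := by
  have h := (mem_iff _).mp γ.2 i j
  have h0 : ((1 : Matrix (Fin 2) (Fin 2) (ZMod 2)) i j) = 0 := by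
    fin_cases i <;> fin_cases j <;> simp_all
  rw [h0] at h
  obtain ⟨t, ht⟩ := (ZMod.intCast_zmod_eq_zero_iff_dvd _ 2).mp h
  exact ⟨t, by omega⟩

lemma det_pm (g : G) : g.val.det = 1 ∨ g.val.det = -1 := by
  have : IsUnit g.val.det := by
    have := g.isUnit
    rwa [Matrix.isUnit_iff_isUnit_det] at this
  exact Int.isUnit_iff.mp this

/- group identities -/
lemma Dsq (e₁ e₂ : ℤˣ) : Delt e₁ e₂ * Delt e₁ e₂ = 1 := by
  apply Subtype.ext; apply Units.ext
  show (Dmat e₁ e₂).val * (Dmat e₁ e₂).val = 1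
  ext i j; fin_cases i <;> fin_cases j <;>
    simp [Dmat, Matrix.mul_apply, Fin.sum_univ_two, Int.units_mul_self]

lemma JAJ (k : ℤ) : Delt 1 (-1) * Aelt k * Delt 1 (-1) = Aelt (-k) := by
  apply Subtype.ext; apply Units.ext
  show (Dmat 1 (-1)).val * (Amat k).val * (Dmat 1 (-1)).val = (Amat (-k)).val
  ext i j; fin_cases i <;> fin_cases j <;>
    simp [Dmat, Amat, Matrix.mul_apply, Fin.sum_univ_two]

lemma JBJ (k : ℤ) : Delt 1 (-1) * Belt k * Delt 1 (-1) = Belt (-k) := by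
  apply Subtype.ext; apply Units.ext
  show (Dmat 1 (-1)).val * (Bmat k).val * (Dmat 1 (-1)).val = (Bmat (-k)).val
  ext i j; fin_cases i <;> fin_cases j <;>
    simp [Dmat, Bmat, Matrix.mul_apply, Fin.sum_univ_two]

lemma Ainv (k : ℤ) : Aelt k * Aelt (-k) = 1 := by
  apply Subtype.ext; apply Units.ext
  show (Amat k).val * (Amat (-k)).val = 1
  ext i j; fin_cases i <;> fin_cases j <;>
    simp [Amat, Matrix.mul_apply, Fin.sum_univ_two]

lemma Binv (k : ℤ) : Belt k * Belt (-k) = 1 := by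
  apply Subtype.ext; apply Units.ext
  show (Bmat k).val * (Bmat (-k)).val = 1
  ext i j; fin_cases i <;> fin_cases j <;>
    simp [Bmat, Matrix.mul_apply, Fin.sum_univ_two]

/- every hom to a comm group kills squares of generators -/
lemma sq_one {M : Type*} [CommGroup M] (f : Γ →* M) {s : Γ} (hs : s ∈ S) :
    f s ^ 2 = 1 := by
  have hD : ∀ e₁ e₂ : ℤˣ, f (Delt e₁ e₂) ^ 2 = 1 := by
    intro e₁ e₂
    rw [sq, ← _root_.map_mul, Dsq, _root_.map_one]
  rcases hs with (⟨k, rfl⟩ | ⟨k, rfl⟩) | ⟨e₁, e₂, rfl⟩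
  · have h1 := congrArg f (JAJ k)
    rw [_root_.map_mul, _root_.map_mul] at h1
    have h2 : f (Aelt (-k)) = f (Aelt k) := by
      rw [← h1]; have := hD 1 (-1); rw [sq] at this
      rw [mul_comm (f (Delt 1 (-1))) (f (Aelt k)), mul_assoc, this, mul_one]
    have h3 : f (Aelt k) * f (Aelt (-k)) = 1 := by rw [← _root_.map_mul, Ainv, _root_.map_one]
    rw [h2, ← sq] at h3; exact h3
  · have h1 := congrArg f (JBJ k)
    rw [_root_.map_mul, _root_.map_mul] at h1
    have h2 : f (Belt (-k)) = f (Belt k) := by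
      rw [← h1]; have := hD 1 (-1); rw [sq] at this
      rw [mul_comm (f (Delt 1 (-1))) (f (Belt k)), mul_assoc, this, mul_one]
    have h3 : f (Belt k) * f (Belt (-k)) = 1 := by rw [← _root_.map_mul, Binv, _root_.map_one]
    rw [h2, ← sq] at h3; exact h3
  · exact hD e₁ e₂

/- the arithmetic shift lemma -/
lemma exists_shift_pos (a d : ℤ) (hd : 0 < d) : ∃ k, (a + 2*d*k).natAbs ≤ d.natAbs := by
  have h2d : (0:ℤ) < 2*d := by omega
  have h1 : 0 ≤ a % (2*d) := Int.emod_nonneg a (by omega)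
  have h2 : a % (2*d) < 2*d := Int.emod_lt_of_pos a h2d
  have heq : 2*d * (a / (2*d)) + a % (2*d) = a := Int.mul_ediv_add_emod a (2*d)
  rcases le_or_gt (a % (2*d)) d with h | h
  · refine ⟨-(a/(2*d)), ?_⟩
    have hneg : 2*d*(-(a/(2*d))) = -(2*d*(a/(2*d))) := by ring
    omega
  · refine ⟨-(a/(2*d)) - 1, ?_⟩
    have hneg : 2*d*(-(a/(2*d)) - 1) = -(2*d*(a/(2*d))) - 2*d := by ring
    omega

lemma exists_shift (a d : ℤ) (hd : d ≠ 0) : ∃ k, (a + 2*d*k).natAbs ≤ d.natAbs := by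
  rcases lt_or_gt_of_ne hd with h | h
  · obtain ⟨k, hk⟩ := exists_shift_pos a (-d) (by omega)
    exact ⟨-k, by rw [show a + 2*d*(-k) = a + 2*(-d)*k by ring]; omega⟩
  · exact exists_shift_pos a d h

end L2C

namespace L2C

lemma mulA_00 (k : ℤ) (γ : Γ) :
    ((Aelt k * γ : Γ) : G).val 0 0 = (γ:G).val 0 0 + 2 * (γ:G).val 1 0 * k := by
  show ((Amat k).val * (γ:G).val) 0 0 = _
  simp [Amat, Matrix.mul_apply, Fin.sum_univ_two]; ring

lemma mulA_10 (k : ℤ) (γ : Γ) :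
    ((Aelt k * γ : Γ) : G).val 1 0 = (γ:G).val 1 0 := by
  show ((Amat k).val * (γ:G).val) 1 0 = _
  simp [Amat, Matrix.mul_apply, Fin.sum_univ_two]

lemma mulB_00 (k : ℤ) (γ : Γ) :
    ((Belt k * γ : Γ) : G).val 0 0 = (γ:G).val 0 0 := by
  show ((Bmat k).val * (γ:G).val) 0 0 = _
  simp [Bmat, Matrix.mul_apply, Fin.sum_univ_two]

lemma mulB_10 (k : ℤ) (γ : Γ) :
    ((Belt k * γ : Γ) : G).val 1 0 = (γ:G).val 1 0 + 2 * (γ:G).val 0 0 * k := by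
  show ((Bmat k).val * (γ:G).val) 1 0 = _
  simp [Bmat, Matrix.mul_apply, Fin.sum_univ_two]; ring

lemma gen (γ : Γ) : γ ∈ Subgroup.closure S := by
  suffices h : ∀ n : ℕ, ∀ γ : Γ, ((γ:G).val 0 0).natAbs + ((γ:G).val 1 0).natAbs ≤ n →
      γ ∈ Subgroup.closure S from h _ γ le_rfl
  intro n
  induction n using Nat.strong_induction_on with
  | _ n ih =>
    intro γ hn
    have ha : Odd ((γ:G).val 0 0) := odd_diag γ 0
    have hdodd : Odd ((γ:G).val 1 1) := odd_diag γ 1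
    have hb : Even ((γ:G).val 0 1) := even_off γ 0 1 (by decide)
    have hc : Even ((γ:G).val 1 0) := even_off γ 1 0 (by decide)
    have ha0 : (γ:G).val 0 0 ≠ 0 := by
      rintro h; rw [h] at ha; exact (by decide : ¬ Odd (0:ℤ)) ha
    by_cases hc0 : (γ:G).val 1 0 = 0
    · -- triangular case
      have hdet := det_pm (γ:G)
      rw [Matrix.det_fin_two, hc0, mul_zero, sub_zero] at hdet
      have hua : (γ:G).val 0 0 = 1 ∨ (γ:G).val 0 0 = -1 := by
        rcases hdet with h | h
        · exact Int.isUnit_iff.mp (IsUnit.of_mul_eq_one _ h)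
        · exact Int.isUnit_iff.mp (IsUnit.of_mul_eq_one _ (by rw [mul_neg, h, neg_neg]))
      have hud : (γ:G).val 1 1 = 1 ∨ (γ:G).val 1 1 = -1 := by
        rcases hdet with h | h
        · exact Int.isUnit_iff.mp (IsUnit.of_mul_eq_one _ (by rw [mul_comm] at h; exact h))
        · exact Int.isUnit_iff.mp (IsUnit.of_mul_eq_one _
            (by rw [mul_neg, mul_comm, h, neg_neg]))
      obtain ⟨m, hm⟩ := hb
      -- pick units
      have key : ∀ e₁ e₂ : ℤˣ, (e₁ : ℤ) = (γ:G).val 0 0 → (e₂ : ℤ) = (γ:G).val 1 1 →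
          γ ∈ Subgroup.closure S := by
        intro e₁ e₂ h1 h2
        have hγ : γ = Delt e₁ e₂ * Aelt ((e₁:ℤ) * m) := by
          apply Subtype.ext; apply Units.ext
          show (γ:G).val = (Dmat e₁ e₂).val * (Amat ((e₁:ℤ)*m)).val
          have hsq : (e₁:ℤ) * (e₁:ℤ) = 1 := by rcases Int.units_eq_one_or e₁ with h|h <;> simp [h]
          ext i j
          fin_cases i <;> fin_cases j <;>
            simp [Dmat, Amat, Matrix.mul_apply, Fin.sum_univ_two, ← h1, ← h2]
          · rw [show (e₁:ℤ) * (2 * ((e₁:ℤ) * m)) = ((e₁:ℤ)*(e₁:ℤ)) * (2*m) by ring, hsq]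
            omega
          · exact hc0
        rw [hγ]
        exact mul_mem (Subgroup.subset_closure (Or.inr ⟨e₁, e₂, rfl⟩))
          (Subgroup.subset_closure (Or.inl (Or.inl ⟨_, rfl⟩)))
      rcases hua with h1 | h1 <;> rcases hud with h2 | h2
      · exact key 1 1 (by simpa using h1.symm) (by simpa using h2.symm)
      · exact key 1 (-1) (by simpa using h1.symm) (by simpa using h2.symm)
      · exact key (-1) 1 (by simpa using h1.symm) (by simpa using h2.symm)
      · exact key (-1) (-1) (by simpa using h1.symm) (by simpa using h2.symm)
    · -- c ≠ 0
      have hne : ((γ:G).val 0 0).natAbs ≠ ((γ:G).val 1 0).natAbs := by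
        obtain ⟨p, hp⟩ := ha; obtain ⟨q, hq⟩ := hc; omega
      rcases Nat.lt_or_ge ((γ:G).val 0 0).natAbs ((γ:G).val 1 0).natAbs with hlt | hge
      · -- reduce c
        obtain ⟨k, hk⟩ := exists_shift ((γ:G).val 1 0) ((γ:G).val 0 0) ha0
        have hstrict : ((γ:G).val 1 0 + 2*((γ:G).val 0 0)*k).natAbs <
            ((γ:G).val 0 0).natAbs := by
          rcases Nat.lt_or_ge ((γ:G).val 1 0 + 2*((γ:G).val 0 0)*k).natAbs
              ((γ:G).val 0 0).natAbs with h | h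
          · exact h
          · exfalso
            have heq : ((γ:G).val 1 0 + 2*((γ:G).val 0 0)*k).natAbs
                = ((γ:G).val 0 0).natAbs := le_antisymm hk h
            have hmul : 2*((γ:G).val 0 0)*k = 2*(((γ:G).val 0 0)*k) := by ring
            obtain ⟨p, hp⟩ := ha; obtain ⟨q, hq⟩ := hc; omega
        have h10 := mulB_10 k γ
        have h00 := mulB_00 k γ
        have hγ' : Belt k * γ ∈ Subgroup.closure S := by
          refine ih ((((Belt k * γ : Γ):G).val 0 0).natAbs
              + (((Belt k * γ : Γ):G).val 1 0).natAbs) ?_ _ le_rfl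
          rw [h00, h10]
          have heq2 : (γ:G).val 1 0 + 2 * (γ:G).val 0 0 * k
              = (γ:G).val 1 0 + 2*((γ:G).val 0 0)*k := by ring
          omega
        have hfac : γ = (Belt k)⁻¹ * (Belt k * γ) := by group
        rw [hfac]
        exact mul_mem (inv_mem (Subgroup.subset_closure (Or.inl (Or.inr ⟨k, rfl⟩)))) hγ'
      · -- reduce a
        have hgt : ((γ:G).val 1 0).natAbs < ((γ:G).val 0 0).natAbs := by omega
        obtain ⟨k, hk⟩ := exists_shift ((γ:G).val 0 0) ((γ:G).val 1 0) hc0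
        have hstrict : ((γ:G).val 0 0 + 2*((γ:G).val 1 0)*k).natAbs <
            ((γ:G).val 1 0).natAbs := by
          rcases Nat.lt_or_ge ((γ:G).val 0 0 + 2*((γ:G).val 1 0)*k).natAbs
              ((γ:G).val 1 0).natAbs with h | h
          · exact h
          · exfalso
            have heq : ((γ:G).val 0 0 + 2*((γ:G).val 1 0)*k).natAbs
                = ((γ:G).val 1 0).natAbs := le_antisymm hk h
            have hmul : 2*((γ:G).val 1 0)*k = 2*(((γ:G).val 1 0)*k) := by ring
            obtain ⟨p, hp⟩ := ha; obtain ⟨q, hq⟩ := hc; omega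
        have h10 := mulA_10 k γ
        have h00 := mulA_00 k γ
        have hγ' : Aelt k * γ ∈ Subgroup.closure S := by
          refine ih ((((Aelt k * γ : Γ):G).val 0 0).natAbs
              + (((Aelt k * γ : Γ):G).val 1 0).natAbs) ?_ _ le_rfl
          rw [h00, h10]
          have heq2 : (γ:G).val 0 0 + 2 * (γ:G).val 1 0 * k
              = (γ:G).val 0 0 + 2*((γ:G).val 1 0)*k := by ring
          omega
        have hfac : γ = (Aelt k)⁻¹ * (Aelt k * γ) := by group
        rw [hfac]
        exact mul_mem (inv_mem (Subgroup.subset_closure (Or.inl (Or.inl ⟨k, rfl⟩)))) hγ'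

end L2C

namespace L2C

lemma hom_triv (f : Γ →* Multiplicative ℚ) : f = 1 := by
  ext γ
  have h := gen γ
  refine Subgroup.closure_induction (p := fun x _ => f x = 1) ?_ ?_ ?_ ?_ h
  · intro s hs
    have hsq := sq_one f hs
    have h2 : (f s).toAdd + (f s).toAdd = 0 := by
      rw [← toAdd_mul, ← sq, hsq]; rfl
    have h3 : (f s).toAdd = 0 := by linarith
    exact toAdd_eq_zero.mp h3
  · exact _root_.map_one f
  · intro x y _ _ hx hy; rw [_root_.map_mul, hx, hy, mul_one]
  · intro x _ hx; rw [_root_.map_inv, hx, inv_one]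

lemma abel_tors (x : Abelianization Γ) : IsOfFinOrder x := by
  refine QuotientGroup.induction_on x ?_
  intro γ
  have h := gen γ
  have key : IsOfFinOrder (Abelianization.of γ) := by
    refine Subgroup.closure_induction
      (p := fun z _ => IsOfFinOrder (Abelianization.of z)) ?_ ?_ ?_ ?_ h
    · intro s hs
      have hsq := sq_one (Abelianization.of (G := Γ)) hs
      exact isOfFinOrder_iff_pow_eq_one.mpr ⟨2, by norm_num, hsq⟩
    · simpa using isOfFinOrder_one
    · intro a b _ _ hx hy; rw [_root_.map_mul]; exact hx.mul hy
    · intro a _ hx; rw [_root_.map_inv]; exact hx.inv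
  exact key

end L2C

namespace L2C

lemma homs_sub : Subsingleton (Additive Γ →+ ℚ) := by
  constructor
  have key : ∀ g : Additive Γ →+ ℚ, g = AddMonoidHom.toMultiplicativeRight.symm 1 := by
    intro g
    have hf := hom_triv (AddMonoidHom.toMultiplicativeRight g)
    rw [← hf, Equiv.symm_apply_apply]
  intro g h
  rw [key g, key h]

lemma coh_sub : Subsingleton (groupCohomology (Rep.trivial ℚ Γ ℚ) 1) := by
  have h1 : Subsingleton (groupCohomology.H1 (Rep.trivial ℚ Γ ℚ)) :=
    @Equiv.subsingleton _ (Additive Γ →+ ℚ)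
      ((groupCohomology.H1IsoOfIsTrivial (Rep.trivial ℚ Γ ℚ)).toLinearEquiv.toEquiv) homs_sub
  exact @Equiv.subsingleton _ _
    (Equiv.refl _) h1

end L2C


/-- Let `Γ` be the level-2 principal congruence subgroup of `GL₂(ℤ)`, i.e. the kernel of
reduction mod `2`.  Then every homomorphism `Γ → (ℚ, +)` is trivial; equivalently,
`H¹(Γ; ℚ) = 0` and every element of the abelianization of `Γ` has finite order. -/
theorem level_two_congruence_subgroup_trivial_first_cohomology :
    (∀ f : ((Matrix.GeneralLinearGroup.map (Int.castRingHom (ZMod 2)) :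
        GL (Fin 2) ℤ →* GL (Fin 2) (ZMod 2))).ker →* Multiplicative ℚ, f = 1) ∧
    Subsingleton (groupCohomology
      (Rep.trivial ℚ ((Matrix.GeneralLinearGroup.map (Int.castRingHom (ZMod 2)) :
        GL (Fin 2) ℤ →* GL (Fin 2) (ZMod 2))).ker ℚ) 1) ∧
    ∀ x : Abelianization ((Matrix.GeneralLinearGroup.map (Int.castRingHom (ZMod 2)) :
        GL (Fin 2) ℤ →* GL (Fin 2) (ZMod 2))).ker, IsOfFinOrder x := by
  exact ⟨fun f => L2C.hom_triv f, L2C.coh_sub, L2C.abel_tors⟩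
end
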